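/- arXiv:0710.0155 — 5 statements merged into one kernel-verified Lean document; each statement's English description precedes it below -/
import Mathlib

section
/- Every separable metrizable topological space has a good basis. -/
open Filter Topology Set Classical

noncomputable section
open scoped Classical

/-- A set is Fσ if it is a countable union of closed sets. -/
def IsFsigma {X : Type*} [TopologicalSpace X] (s : Set X) : Prop :=
  ∃ F : ℕ → Set X, (∀ n, IsClosed (F n)) ∧ s = ⋃ n, F n

/-- A function is Baire class one if the preimage of every open set is Fσ. -/
def BaireClassOneFn {X Y : Type*} [TopologicalSpace X] [TopologicalSpace Y] (f : X → Y) : Prop :=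
  ∀ U : Set Y, IsOpen U → IsFsigma (f ⁻¹' U)

/-- A countable basis `(W m)` is good if for every open `U` and `x ∈ U` there is `m₀`
such that for all `m ≥ m₀`, `x ∈ W m` implies `W m ⊆ U`. -/
def IsGoodBasis {X : Type*} [TopologicalSpace X] (W : ℕ → Set X) : Prop :=
  TopologicalSpace.IsTopologicalBasis (Set.range W) ∧
  ∀ U : Set X, IsOpen U → ∀ x ∈ U, ∃ m₀, ∀ m ≥ m₀, x ∈ W m → W m ⊆ U

/-- The path to `x` based on the dense sequence `D`, relative to the good basis `W`. -/
noncomputable def pathSeq {X : Type*} (W : ℕ → Set X) (D : ℕ → X) (x : X) : ℕ → X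
  | 0 => D 0
  | n + 1 =>
    if x = pathSeq W D x n then pathSeq W D x n
    else D (sInf {p | ∃ m, x ∈ W m ∧ D p ∈ W m ∧ ∀ k, k ≤ n → pathSeq W D x k ∉ W m})
  termination_by n => n
  decreasing_by all_goals omega

/-- `f` is recoverable with respect to `D` (and the good basis `W`). -/
def RecoverableWith {X Y : Type*} [TopologicalSpace Y] (W : ℕ → Set X) (D : ℕ → X)
    (f : X → Y) : Prop :=
  ∀ x : X, Tendsto (fun n => f (pathSeq W D x n)) atTop (𝓝 (f x))

/-- Every separable metrizable topological space has a good basis. -/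
theorem exists_goodBasis {X : Type*} [TopologicalSpace X]
    [TopologicalSpace.SeparableSpace X] [TopologicalSpace.MetrizableSpace X] :
    ∃ W : ℕ → Set X, IsGoodBasis W := by
  cases isEmpty_or_nonempty X with
  | inl h =>
    refine ⟨fun _ => ∅, ?_, ?_⟩
    · apply TopologicalSpace.isTopologicalBasis_of_isOpen_of_nhds
      · rintro u ⟨m, rfl⟩; exact isOpen_empty
      · intro a; exact (h.false a).elim
    · intro U _ x hx; exact (h.false x).elim
  | inr hne =>
    letI : MetricSpace X := TopologicalSpace.metrizableSpaceMetric X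
    obtain ⟨d, hd⟩ := TopologicalSpace.exists_dense_seq X
    have hdense : ∀ (x : X) (ε : ℝ), 0 < ε → ∃ n, dist x (d n) < ε := by
      intro x ε hε
      exact Metric.denseRange_iff.mp hd x ε hε
    set W : ℕ → Set X := fun m =>
      Metric.ball (d m.unpair.1) ((1/2 : ℝ) ^ m.unpair.2) \
        ⋃ j ∈ Finset.range m.unpair.1,
          Metric.closedBall (d j) ((1/2 : ℝ) ^ m.unpair.2 / 16) with hWdef
    have rpos : ∀ k : ℕ, (0:ℝ) < (1/2 : ℝ) ^ k := fun k => by positivity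
    have hWm : ∀ i k : ℕ, W (Nat.pair i k) =
        Metric.ball (d i) ((1/2 : ℝ) ^ k) \
        ⋃ j ∈ Finset.range i, Metric.closedBall (d j) ((1/2 : ℝ) ^ k / 16) := by
      intro i k; simp [hWdef, Nat.unpair_pair]
    have hopen : ∀ m, IsOpen (W m) := by
      intro m
      apply IsOpen.sdiff Metric.isOpen_ball
      exact isClosed_biUnion_finset fun j _ => Metric.isClosed_closedBall
    -- membership lemma: for every x and k, x ∈ W (pair i k) for the minimal-ish i
    have hmem : ∀ (x : X) (k : ℕ), ∃ i, x ∈ W (Nat.pair i k) := by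
      intro x k
      have hex : ∃ i, dist x (d i) < (1/2:ℝ)^k / 8 := hdense x _ (by positivity)
      refine ⟨Nat.find hex, ?_⟩
      rw [hWm]
      constructor
      · refine Metric.mem_ball'.mpr ?_
        rw [dist_comm]
        calc dist x (d (Nat.find hex)) < (1/2:ℝ)^k / 8 := Nat.find_spec hex
          _ < (1/2:ℝ)^k := by have := rpos k; linarith
      · simp only [Set.mem_iUnion, not_exists]
        intro j hj
        have hj' : j < Nat.find hex := Finset.mem_range.mp hj
        have := Nat.find_min hex hj'
        push_neg at this
        intro hc
        have : (1/2:ℝ)^k / 8 ≤ dist x (d j) := this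
        have h2 : dist x (d j) ≤ (1/2:ℝ)^k / 16 := Metric.mem_closedBall.mp hc
        have := rpos k
        linarith
    refine ⟨W, ?_, ?_⟩
    · apply TopologicalSpace.isTopologicalBasis_of_isOpen_of_nhds
      · rintro u ⟨m, rfl⟩; exact hopen m
      · intro a u hau hu
        obtain ⟨ε, hε, hball⟩ := Metric.isOpen_iff.mp hu a hau
        obtain ⟨k, hk⟩ := exists_pow_lt_of_lt_one (by linarith : (0:ℝ) < ε/2)
          (by norm_num : (1/2:ℝ) < 1)
        obtain ⟨i, hi⟩ := hmem a k
        refine ⟨W (Nat.pair i k), ⟨_, rfl⟩, hi, ?_⟩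
        intro y hy
        apply hball
        rw [hWm] at hi hy
        have h1 : dist y (d i) < (1/2:ℝ)^k := Metric.mem_ball.mp hy.1
        have h2 : dist a (d i) < (1/2:ℝ)^k := Metric.mem_ball.mp hi.1
        have : dist y a < ε := by
          calc dist y a ≤ dist y (d i) + dist a (d i) := dist_triangle_right _ _ _
            _ < (1/2:ℝ)^k + (1/2:ℝ)^k := by linarith
            _ < ε := by linarith
        exact Metric.mem_ball.mpr this
    · intro U hU x hx
      obtain ⟨ε, hε, hball⟩ := Metric.isOpen_iff.mp hU x hx
      obtain ⟨K, hK⟩ := exists_pow_lt_of_lt_one (by linarith : (0:ℝ) < ε/2)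
        (by norm_num : (1/2:ℝ) < 1)
      -- for each scale k < K pick a close dense point
      have hch : ∀ k : ℕ, ∃ j, dist x (d j) < (1/2:ℝ)^k / 16 :=
        fun k => hdense x _ (by positivity)
      choose jf hjf using hch
      set J : ℕ := Finset.sup (Finset.range K) jf with hJ
      refine ⟨(J + K + 1)^2, ?_⟩
      intro m hm hxm
      set i := m.unpair.1 with hi
      set k := m.unpair.2 with hk'
      have hmpair : Nat.pair i k = m := Nat.pair_unpair m
      by_cases hkK : K ≤ k
      · -- small scale: W m ⊆ ball x ε ⊆ U
        intro y hy
        apply hball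
        rw [← hmpair, hWm] at hxm hy
        have h1 : dist y (d i) < (1/2:ℝ)^k := Metric.mem_ball.mp hy.1
        have h2 : dist x (d i) < (1/2:ℝ)^k := Metric.mem_ball.mp hxm.1
        have hle : (1/2:ℝ)^k ≤ (1/2:ℝ)^K :=
          pow_le_pow_of_le_one (by norm_num) (by norm_num) hkK
        have : dist y x < ε := by
          calc dist y x ≤ dist y (d i) + dist x (d i) := dist_triangle_right _ _ _
            _ < (1/2:ℝ)^k + (1/2:ℝ)^k := by linarith
            _ ≤ (1/2:ℝ)^K + (1/2:ℝ)^K := by linarith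
            _ < ε := by linarith
        exact Metric.mem_ball.mpr this
      · -- big scale k < K can't happen for m ≥ m₀
        exfalso
        push_neg at hkK
        have hiJ : jf k < i := by
          by_contra hle
          push_neg at hle
          have hjk : jf k ≤ J := Finset.le_sup (Finset.mem_range.mpr hkK)
          have h1 : Nat.pair i k < (max i k + 1)^2 := Nat.pair_lt_max_add_one_sq i k
          have h2 : max i k ≤ J + K := by
            have : i ≤ J := le_trans hle hjk
            have : k ≤ K := hkK.le
            omega
          have : m < (J + K + 1)^2 := by
            rw [← hmpair]
            calc Nat.pair i k < (max i k + 1)^2 := h1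
              _ ≤ (J + K + 1)^2 := Nat.pow_le_pow_left (by omega) 2
          omega
        rw [← hmpair, hWm] at hxm
        apply hxm.2
        refine Set.mem_biUnion (Finset.mem_range.mpr hiJ) ?_
        exact Metric.mem_closedBall.mpr (hjf k).le
end
end

section
/- Let X and Y be separable metrizable spaces, fix a good basis (W_m) of X, and let D = (x_p) be a dense sequence in X. Assume that for every q ∈ ℕ the set {x ∈ X : ∃n, s_n[x,D] = x_q} is an open subset of X. If f : X → Y is recoverable with respect to D, then f is Baire class one. -/
/-! For open `U ⊆ Y` choose closed `Cₖ ⊆ U` such that every point of `U` has some `Cₖ` as a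
neighbourhood. Then `f⁻¹ U` is the union, over `k` and finite `E ⊆ ℕ`, of the sets of `x ∉ D(E)`
whose path meets `f⁻¹(Y \ Cₖ)` only inside `D(E)`. Each such set is closed ∩ open, hence Fσ: as
every path point is some `x_q`, the closed part is the complement of a union of the open sets
`{x | x_q lies on the path to x}`. If `x` lies on its own path it is an `x_q ∉ D(E)`, so
`f x ∈ Cₖ`; otherwise the path is injective, meets the finite set `D(E)` finitely often, and
recoverability gives `f x ∈ Cₖ`. Conversely, recoverability puts `f(sₙ)` into `Cₖ` from some `N` on, and `E` indexes
the earlier exceptions. -/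

open Filter Topology Set Classical

noncomputable section
open scoped Classical

section IsFsigma

variable {X : Type*} [TopologicalSpace X]

theorem isFsigma_iff_isGδ_compl {s : Set X} : IsFsigma s ↔ IsGδ sᶜ := by
  rw [isGδ_iff_eq_iInter_nat]
  constructor
  · rintro ⟨F, hF, rfl⟩
    exact ⟨fun n => (F n)ᶜ, fun n => (hF n).isOpen_compl, compl_iUnion F⟩
  · rintro ⟨G, hG, hs⟩
    refine ⟨fun n => (G n)ᶜ, fun n => (hG n).isClosed_compl, ?_⟩
    rw [← compl_iInter, ← hs, compl_compl]

theorem IsFsigma.iUnion {ι : Type*} [Countable ι] {s : ι → Set X}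
    (hs : ∀ i, IsFsigma (s i)) : IsFsigma (⋃ i, s i) := by
  rw [isFsigma_iff_isGδ_compl, compl_iUnion]
  exact .iInter fun i => isFsigma_iff_isGδ_compl.mp (hs i)

theorem IsFsigma.inter {s t : Set X} (hs : IsFsigma s) (ht : IsFsigma t) :
    IsFsigma (s ∩ t) := by
  rw [isFsigma_iff_isGδ_compl, compl_inter]
  exact (isFsigma_iff_isGδ_compl.mp hs).union (isFsigma_iff_isGδ_compl.mp ht)

theorem IsClosed.isFsigma {s : Set X} (hs : IsClosed s) : IsFsigma s :=
  isFsigma_iff_isGδ_compl.mpr hs.isOpen_compl.isGδ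

theorem IsOpen.isFsigma [PerfectlyNormalSpace X] {s : Set X} (hs : IsOpen s) : IsFsigma s :=
  isFsigma_iff_isGδ_compl.mpr hs.isClosed_compl.isGδ

end IsFsigma

theorem IsOpen.exists_isClosed_subset_mem_nhds {Y : Type*} [TopologicalSpace Y]
    [TopologicalSpace.PseudoMetrizableSpace Y] {U : Set Y} (hU : IsOpen U) :
    ∃ C : ℕ → Set Y, (∀ k, IsClosed (C k)) ∧ (∀ k, C k ⊆ U) ∧ ∀ y ∈ U, ∃ k, C k ∈ 𝓝 y := by
  let := TopologicalSpace.pseudoMetrizableSpacePseudoMetric Y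
  refine ⟨fun k => {y | (k : ENNReal)⁻¹ ≤ Metric.infEDist y Uᶜ},
    fun k => isClosed_le continuous_const Metric.continuous_infEDist, ?_, ?_⟩
  · intro k y (hy : (k : ENNReal)⁻¹ ≤ Metric.infEDist y Uᶜ)
    by_contra hyU
    rw [Metric.infEDist_zero_of_mem hyU] at hy
    exact ENNReal.inv_ne_zero.mpr (ENNReal.natCast_ne_top k) (nonpos_iff_eq_zero.mp hy)
  · intro y hy
    have hpos : Metric.infEDist y Uᶜ ≠ 0 := fun h =>
      (Metric.mem_iff_infEDist_zero_of_closed hU.isClosed_compl).mpr h hy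
    obtain ⟨k, hk⟩ := ENNReal.exists_inv_nat_lt hpos
    exact ⟨k, mem_of_superset
      ((isOpen_lt continuous_const Metric.continuous_infEDist).mem_nhds hk)
      fun _ hz => (le_of_lt hz : (k : ENNReal)⁻¹ ≤ _)⟩

section pathSeq

variable {X : Type*} {W : ℕ → Set X} {D : ℕ → X}

theorem pathSeq_mem_range (x : X) (n : ℕ) : pathSeq W D x n ∈ range D := by
  induction n with
  | zero => rw [pathSeq]; exact mem_range_self 0
  | succ n ih =>
    rw [pathSeq]
    split_ifs
    · exact ih
    · exact mem_range_self _

theorem pathSeq_succ_ne [TopologicalSpace X] [T1Space X]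
    (hW : TopologicalSpace.IsTopologicalBasis (range W)) (hD : DenseRange D) {x : X} {n k : ℕ}
    (hx : ∀ j ≤ n, pathSeq W D x j ≠ x) (hk : k ≤ n) :
    pathSeq W D x (n + 1) ≠ pathSeq W D x k := by
  have hvisited : (pathSeq W D x '' Iic n).Finite := (finite_Iic n).image _
  have hxv : x ∈ (pathSeq W D x '' Iic n)ᶜ := fun ⟨j, hj, hjx⟩ => hx j hj hjx
  obtain ⟨_, ⟨m, rfl⟩, hxm, hmv⟩ :=
    hW.exists_subset_of_mem_open hxv hvisited.isClosed.isOpen_compl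
  obtain ⟨p, hp⟩ := hD.exists_mem_open (hW.isOpen ⟨m, rfl⟩) ⟨x, hxm⟩
  have hne : {p | ∃ m, x ∈ W m ∧ D p ∈ W m ∧ ∀ j, j ≤ n → pathSeq W D x j ∉ W m}.Nonempty :=
    ⟨p, m, hxm, hp, fun j hj hjm => hmv hjm ⟨j, hj, rfl⟩⟩
  rw [pathSeq, if_neg (hx n le_rfl).symm]
  obtain ⟨m', -, hm', hfresh⟩ := Nat.sInf_mem hne
  exact fun h => hfresh k hk (h ▸ hm')

theorem pathSeq_injective [TopologicalSpace X] [T1Space X]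
    (hW : TopologicalSpace.IsTopologicalBasis (range W)) (hD : DenseRange D) {x : X}
    (hx : ∀ n, pathSeq W D x n ≠ x) : Function.Injective (pathSeq W D x) := by
  refine Function.Injective.of_lt_imp_ne fun a b hab => ?_
  obtain ⟨b, rfl⟩ : ∃ b', b = b' + 1 := ⟨b - 1, by omega⟩
  exact (pathSeq_succ_ne hW hD (fun j _ => hx j) (Nat.le_of_lt_succ hab)).symm

theorem isClosed_setOf_forall_pathSeq [TopologicalSpace X]
    (hopen : ∀ q : ℕ, IsOpen {x : X | ∃ n, pathSeq W D x n = D q}) (P : X → Prop) :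
    IsClosed {x | ∀ n, P (pathSeq W D x n)} := by
  have hcompl : {x | ∀ n, P (pathSeq W D x n)}ᶜ =
      ⋃ q, ⋃ (_ : ¬ P (D q)), {x | ∃ n, pathSeq W D x n = D q} := by
    ext x
    simp only [compl_ofPred, not_forall, mem_ofPred_eq, mem_iUnion, exists_prop]
    constructor
    · rintro ⟨n, hn⟩
      obtain ⟨q, hq⟩ := pathSeq_mem_range (W := W) x n
      exact ⟨q, by rwa [hq], n, hq.symm⟩
    · rintro ⟨q, hq, n, hn⟩
      exact ⟨n, hn ▸ hq⟩
  rw [← isOpen_compl_iff, hcompl]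
  exact isOpen_iUnion fun q => isOpen_iUnion fun _ => hopen q

variable {Y : Type*} [TopologicalSpace Y] {f : X → Y} {C : Set Y} {x : X}

theorem exists_finset_forall_pathSeq_mem_or_mem
    (hfx : Tendsto (fun n => f (pathSeq W D x n)) atTop (𝓝 (f x))) (hC : C ∈ 𝓝 (f x)) :
    ∃ E : Finset ℕ, x ∉ D '' E ∧ ∀ n, f (pathSeq W D x n) ∈ C ∨ pathSeq W D x n ∈ D '' E := by
  obtain ⟨N, hN⟩ := eventually_atTop.mp (hfx hC)
  choose q hq using pathSeq_mem_range (W := W) (D := D) x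
  refine ⟨((Finset.range N).filter fun n => pathSeq W D x n ≠ x).image q, ?_, fun n => ?_⟩
  · rintro ⟨_, hp, hpx⟩
    obtain ⟨n, hn, rfl⟩ := Finset.mem_image.mp hp
    exact (Finset.mem_filter.mp hn).2 (hq n ▸ hpx)
  · by_cases hnx : pathSeq W D x n = x
    · rw [hnx]
      exact .inl (mem_of_mem_nhds hC)
    by_cases hnN : N ≤ n
    · exact .inl (hN n hnN)
    refine .inr ⟨q n, Finset.mem_image_of_mem q ?_, hq n⟩
    exact Finset.mem_filter.mpr ⟨Finset.mem_range.mpr (not_le.mp hnN), hnx⟩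

theorem apply_mem_of_forall_pathSeq_mem_or_mem [TopologicalSpace X] [T1Space X]
    (hW : TopologicalSpace.IsTopologicalBasis (range W)) (hD : DenseRange D)
    (hfx : Tendsto (fun n => f (pathSeq W D x n)) atTop (𝓝 (f x))) (hC : IsClosed C)
    {S : Set X} (hS : S.Finite) (hxS : x ∉ S)
    (hpath : ∀ n, f (pathSeq W D x n) ∈ C ∨ pathSeq W D x n ∈ S) : f x ∈ C := by
  by_cases hvisit : ∃ n, pathSeq W D x n = x
  · obtain ⟨n, hn⟩ := hvisit
    have hfn := (hpath n).resolve_right (by rwa [hn])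
    rwa [hn] at hfn
  push Not at hvisit
  have hbad : {n | f (pathSeq W D x n) ∉ C}.Finite :=
    (hS.preimage (pathSeq_injective hW hD hvisit).injOn).subset
      fun n hn => (hpath n).resolve_left hn
  refine hC.mem_of_tendsto hfx ?_
  rw [← Nat.cofinite_eq_atTop]
  exact eventually_cofinite.mpr hbad

end pathSeq

theorem baireClassOne_of_recoverableWith_general {X Y : Type*}
    [TopologicalSpace X] [TopologicalSpace.MetrizableSpace X]
    [TopologicalSpace Y] [TopologicalSpace.MetrizableSpace Y]
    (W : ℕ → Set X) (hW : IsGoodBasis W) (D : ℕ → X) (hD : DenseRange D)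
    (hopen : ∀ q : ℕ, IsOpen {x : X | ∃ n, pathSeq W D x n = D q})
    (f : X → Y) (hf : RecoverableWith W D f) :
    BaireClassOneFn f := by
  intro U hU
  obtain ⟨C, hC_closed, hC_sub, hC_nhds⟩ := hU.exists_isClosed_subset_mem_nhds
  have hpre : f ⁻¹' U = ⋃ (k : ℕ) (E : Finset ℕ),
      {x | ∀ n, f (pathSeq W D x n) ∈ C k ∨ pathSeq W D x n ∈ D '' E} ∩ (D '' E)ᶜ := by
    ext x
    simp only [mem_preimage, mem_iUnion, mem_inter_iff, mem_ofPred_eq, mem_compl_iff]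
    constructor
    · intro hx
      obtain ⟨k, hk⟩ := hC_nhds _ hx
      obtain ⟨E, hxE, hE⟩ := exists_finset_forall_pathSeq_mem_or_mem (hf x) hk
      exact ⟨k, E, hE, hxE⟩
    · rintro ⟨k, E, hE, hxE⟩
      exact hC_sub k <| apply_mem_of_forall_pathSeq_mem_or_mem hW.1 hD (hf x) (hC_closed k)
        (E.finite_toSet.image D) hxE hE
  rw [hpre]
  exact .iUnion fun k => .iUnion fun E =>
    (isClosed_setOf_forall_pathSeq hopen fun z => f z ∈ C k ∨ z ∈ D '' E).isFsigma.inter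
      (E.finite_toSet.image D).isClosed.isOpen_compl.isFsigma

/-- If the sets  are open and  is recoverable with respect to
the dense sequence , then  is Baire class one. -/
theorem baireClassOne_of_recoverableWith {X Y : Type*}
    [TopologicalSpace X] [TopologicalSpace.SeparableSpace X] [TopologicalSpace.MetrizableSpace X]
    [TopologicalSpace Y] [TopologicalSpace.SeparableSpace Y] [TopologicalSpace.MetrizableSpace Y]
    (W : ℕ → Set X) (hW : IsGoodBasis W) (D : ℕ → X) (hD : DenseRange D)
    (hopen : ∀ q : ℕ, IsOpen {x : X | ∃ n, pathSeq W D x n = D q})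
    (f : X → Y) (hf : RecoverableWith W D f) :
    BaireClassOneFn f :=
  baireClassOne_of_recoverableWith_general W hW D hD hopen f hf
end
end

section
/- The space (Z,d) is an ultrametric space, it is homeomorphic to the Baire space ω^ω = ℕ^ℕ, and it is not a discrete ultrametric space. -/
open Filter Topology Set Classical

noncomputable section
open scoped Classical

/-- The (first return) route to `x` based on the dense sequence `D`, relative to a
distance function `d`. -/
noncomputable def routeSeq {X : Type*} (d : X → X → ℝ) (D : ℕ → X) (x : X) : ℕ → X
  | 0 => D 0
  | n + 1 =>
    if x = routeSeq d D x n then routeSeq d D x n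
    else D (sInf {p | d x (D p) < d x (routeSeq d D x n)})

/-- The space `Z` of strictly increasing sequences of nonnegative rationals tending to `+∞`. -/
def Zsp : Type :=
  {q : ℕ → ℚ // (∀ n, 0 ≤ q n) ∧ StrictMono q ∧ Tendsto q atTop atTop}

/-- The distance on `Z` : `d(Q,Q') = 2 ^ (- min (q_n, q'_n))` where `n` is the least index
where `Q` and `Q'` differ, and `0` if `Q = Q'`. -/
noncomputable def dZ (Q Q' : Zsp) : ℝ :=
  if Q = Q' then 0
  else (2 : ℝ) ^
    (-((min (Q.1 (sInf {n | Q.1 n ≠ Q'.1 n})) (Q'.1 (sInf {n | Q.1 n ≠ Q'.1 n})) : ℚ) : ℝ))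

/-!
Two sequences are within `2 ^ (-r)` of each other exactly when they agree at every index where
one of them is below `r`. This gives the ultrametric inequality, and shows that a neighbourhood
basis of `Q` is given by the sequences agreeing with `Q` on an initial segment.

Cut `Q` into blocks, each one starting at the first term that exceeds the start of the previous
block by at least `1`. Given the previous block, the possible next blocks (nonempty finite
increasing lists above a threshold, spanning less than `1`) form a countably infinite set, and
conversely any sequence of admissible blocks concatenates to an element of `Z`, because the block
starts grow by at least `1` at each step. Numbering the admissible blocks gives a bijection with
`ℕ → ℕ` in which every coordinate, on either side, depends on finitely many coordinates of the
other side: it is a homeomorphism.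

Finally `d(c + n, c + 1 + n) = 2 ^ (-c)`, so the distances `2 ^ (-n / (n + 1))` decrease strictly
but stay above `1 / 2`.
-/

namespace Zsp

lemma nonneg (Q : Zsp) (n : ℕ) : 0 ≤ Q.1 n := Q.2.1 n

lemma strictMono (Q : Zsp) : StrictMono Q.1 := Q.2.2.1

lemma tendsto_atTop (Q : Zsp) : Tendsto Q.1 atTop atTop := Q.2.2.2

lemma ext {Q Q' : Zsp} (h : ∀ n, Q.1 n = Q'.1 n) : Q = Q' := Subtype.ext (funext h)

lemma dZ_comm (Q Q' : Zsp) : dZ Q Q' = dZ Q' Q := by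
  by_cases h : Q = Q'
  · subst h; rfl
  · simp only [dZ, if_neg h, if_neg (Ne.symm h), ne_comm, min_comm]

lemma dZ_nonneg (Q Q' : Zsp) : 0 ≤ dZ Q Q' := by
  unfold dZ; split_ifs <;> positivity

lemma eq_of_dZ_eq_zero {Q Q' : Zsp} (h : dZ Q Q' = 0) : Q = Q' := by
  by_contra hne
  rw [dZ, if_neg hne] at h
  exact (Real.rpow_pos_of_pos two_pos _).ne' h

lemma dZ_le_two_rpow_iff {Q Q' : Zsp} {r : ℚ} :
    dZ Q Q' ≤ 2 ^ (-(r : ℝ)) ↔ ∀ i, min (Q.1 i) (Q'.1 i) < r → Q.1 i = Q'.1 i := by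
  by_cases hQ : Q = Q'
  · subst hQ
    simp only [dZ, if_pos, implies_true, iff_true]
    positivity
  have hne : {n | Q.1 n ≠ Q'.1 n}.Nonempty := by
    by_contra h
    exact hQ (ext fun n => by_contra fun hn => h ⟨n, hn⟩)
  set n := sInf {n | Q.1 n ≠ Q'.1 n}
  have hn : Q.1 n ≠ Q'.1 n := Nat.sInf_mem hne
  rw [dZ, if_neg hQ, Real.rpow_le_rpow_left_iff one_lt_two, neg_le_neg_iff, Rat.cast_le]
  constructor
  · intro hr i hi
    have hin : i < n := by
      by_contra! hni
      exact hi.not_ge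
        (hr.trans (min_le_min (Q.strictMono.monotone hni) (Q'.strictMono.monotone hni)))
    simpa using Nat.notMem_of_lt_sInf hin
  · intro h
    by_contra! hr
    exact hn (h n hr)

lemma dZ_le_of_forall_le_eq {Q Q' : Zsp} {N : ℕ} (h : ∀ i ≤ N, Q.1 i = Q'.1 i) :
    dZ Q Q' ≤ 2 ^ (-(Q.1 N : ℝ)) := by
  refine dZ_le_two_rpow_iff.mpr fun i hi => h i ?_
  by_contra! hNi
  refine hi.not_ge (le_min (Q.strictMono hNi).le ?_)
  rw [h N le_rfl]
  exact (Q'.strictMono hNi).le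

lemma eq_of_dZ_le_two_rpow_succ {Q Q' : Zsp} {N : ℕ}
    (h : dZ Q Q' ≤ 2 ^ (-((Q.1 N + 1 : ℚ) : ℝ))) :
    ∀ i ≤ N, Q.1 i = Q'.1 i := fun i hi =>
  dZ_le_two_rpow_iff.mp h i ((min_le_left _ _).trans_lt
    ((Q.strictMono.monotone hi).trans_lt (lt_add_one _)))

lemma dZ_le_max (Q Q' Q'' : Zsp) : dZ Q Q'' ≤ max (dZ Q Q') (dZ Q' Q'') := by
  wlog h : dZ Q' Q'' ≤ dZ Q Q' generalizing Q Q''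
  · rw [dZ_comm Q Q'', dZ_comm Q Q', dZ_comm Q' Q'', max_comm]
    exact this Q'' Q (by rw [dZ_comm Q', dZ_comm Q'']; exact (not_le.mp h).le)
  rw [max_eq_left h]
  by_cases hQ : Q = Q'
  · subst hQ; exact h
  obtain ⟨s, hs⟩ : ∃ s : ℚ, dZ Q Q' = 2 ^ (-(s : ℝ)) := ⟨_, if_neg hQ⟩
  rw [hs] at h ⊢
  have h₁ := dZ_le_two_rpow_iff.mp hs.le
  have h₂ := dZ_le_two_rpow_iff.mp h
  refine dZ_le_two_rpow_iff.mpr fun i hi => ?_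
  rcases min_lt_iff.mp hi with hi | hi
  · have e₁ := h₁ i (min_lt_of_left_lt hi)
    exact e₁.trans (h₂ i (min_lt_of_left_lt (e₁ ▸ hi)))
  · have e₂ := h₂ i (min_lt_of_right_lt hi)
    exact (h₁ i (min_lt_of_right_lt (e₂ ▸ hi))).trans e₂

instance : MetricSpace Zsp where
  dist := dZ
  dist_self Q := if_pos rfl
  dist_comm := dZ_comm
  dist_triangle Q Q' Q'' := (dZ_le_max Q Q' Q'').trans
    (max_le_add_of_nonneg (dZ_nonneg _ _) (dZ_nonneg _ _))
  eq_of_dist_eq_zero := eq_of_dZ_eq_zero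

end Zsp

section ChainCoding

variable {α γ : Type*} (next : γ → α) (t₀ : α)

def chainState (β : ℕ → γ) : ℕ → α
  | 0 => t₀
  | k + 1 => next (β k)

def IsChainedSeq (P : α → γ → Prop) (β : ℕ → γ) : Prop :=
  ∀ k, P (chainState next t₀ β k) (β k)

variable {P : α → γ → Prop} (e : ∀ t, {c // P t c} ≃ ℕ)

def chainDecode (a : ℕ → ℕ) : ℕ → γ
  | 0 => ((e t₀).symm (a 0)).1
  | k + 1 => ((e (next (chainDecode a k))).symm (a (k + 1))).1

lemma isChainedSeq_chainDecode (a : ℕ → ℕ) :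
    IsChainedSeq next t₀ P (chainDecode next t₀ e a)
  | 0 => ((e t₀).symm (a 0)).2
  | k + 1 => ((e (next (chainDecode next t₀ e a k))).symm (a (k + 1))).2

def chainEncode (β : ℕ → γ) (hβ : IsChainedSeq next t₀ P β) (k : ℕ) : ℕ :=
  e _ ⟨β k, hβ k⟩

lemma chainDecode_chainEncode (β : ℕ → γ) (hβ : IsChainedSeq next t₀ P β) :
    chainDecode next t₀ e (chainEncode next t₀ e β hβ) = β := by
  funext k
  induction k with
  | zero => exact congrArg Subtype.val ((e t₀).symm_apply_apply _)
  | succ k ih =>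
    change ((e (next (chainDecode next t₀ e _ k))).symm (e (next (β k)) _)).1 = _
    rw [ih]
    exact congrArg Subtype.val ((e _).symm_apply_apply _)

lemma chainEncode_chainDecode (a : ℕ → ℕ) :
    chainEncode next t₀ e (chainDecode next t₀ e a) (isChainedSeq_chainDecode next t₀ e a) =
      a := by
  funext k
  cases k <;> exact (e _).apply_symm_apply _

def chainEquiv : {β // IsChainedSeq next t₀ P β} ≃ (ℕ → ℕ) where
  toFun β := chainEncode next t₀ e β.1 β.2
  invFun a := ⟨chainDecode next t₀ e a, isChainedSeq_chainDecode next t₀ e a⟩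
  left_inv β := Subtype.ext (chainDecode_chainEncode next t₀ e β.1 β.2)
  right_inv := chainEncode_chainDecode next t₀ e

lemma apply_eq_of_index_eq {t t' : α} (h : t = t') {c : {c // P t c}} {c' : {c // P t' c}}
    (hc : c.1 = c'.1) : e t c = e t' c' := by
  subst h
  rw [Subtype.ext hc]

lemma chainEquiv_apply_congr {β β' : {β // IsChainedSeq next t₀ P β}} {k : ℕ}
    (h : ∀ j ≤ k, β'.1 j = β.1 j) :
    chainEquiv next t₀ e β' k = chainEquiv next t₀ e β k := by
  refine apply_eq_of_index_eq e ?_ (h k le_rfl)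
  cases k with
  | zero => rfl
  | succ k => exact congrArg next (h k k.le_succ)

lemma chainDecode_congr {a a' : ℕ → ℕ} {k : ℕ} (h : ∀ j ≤ k, a' j = a j) :
    ∀ j ≤ k, chainDecode next t₀ e a' j = chainDecode next t₀ e a j := by
  intro j hj
  induction j with
  | zero => simp only [chainDecode, h 0 hj]
  | succ j ih =>
    simp only [chainDecode, h (j + 1) hj]
    rw [ih (by omega)]

end ChainCoding

section Concatenation

variable {α : Type*} (β : ℕ → List α)

def prefixList (k : ℕ) : List α := (List.range k).flatMap β

lemma prefixList_succ (k : ℕ) : prefixList β (k + 1) = prefixList β k ++ β k := by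
  simp [prefixList, List.range_succ]

lemma prefixList_isPrefix {k k' : ℕ} (h : k ≤ k') : prefixList β k <+: prefixList β k' := by
  induction k', h using Nat.le_induction with
  | base => exact List.prefix_rfl
  | succ k' _ ih => exact ih.trans (by rw [prefixList_succ]; exact List.prefix_append _ _)

lemma le_length_prefixList (hβ : ∀ k, β k ≠ []) (k : ℕ) :
    k ≤ (prefixList β k).length := by
  induction k with
  | zero => exact le_rfl
  | succ k ih =>
    rw [prefixList_succ, List.length_append]
    have := List.length_pos_iff.mpr (hβ k)
    omega

lemma prefixList_congr {β' : ℕ → List α} {k : ℕ} (h : ∀ j < k, β' j = β j) :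
    prefixList β' k = prefixList β k :=
  List.flatMap_congr fun j hj => h j (List.mem_range.mp hj)

end Concatenation

/-- `0` is a junk default, never reached when every `β k` is nonempty. -/
def concatSeq (β : ℕ → List ℚ) (n : ℕ) : ℚ := (prefixList β (n + 1)).getD n 0

lemma concatSeq_eq_getElem {β : ℕ → List ℚ} (hβ : ∀ k, β k ≠ []) {n k : ℕ}
    (h : n < (prefixList β k).length) : concatSeq β n = (prefixList β k)[n] := by
  have hn : n < (prefixList β (n + 1)).length := le_length_prefixList β hβ (n + 1)
  rw [concatSeq, List.getD_eq_getElem _ _ hn]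
  rcases le_total k (n + 1) with hk | hk
  · exact ((prefixList_isPrefix β hk).getElem h).symm
  · exact (prefixList_isPrefix β hk).getElem hn

lemma concatSeq_congr {β β' : ℕ → List ℚ} {n : ℕ} (h : ∀ j ≤ n, β' j = β j) :
    concatSeq β' n = concatSeq β n := by
  rw [concatSeq, concatSeq, prefixList_congr β fun j hj => h j (Nat.lt_succ_iff.mp hj)]

def IsBlock (t : ℚ) (l : List ℚ) : Prop :=
  l ≠ [] ∧ l.Pairwise (· < ·) ∧ ∀ x ∈ l, t ≤ x ∧ x < l.headI + 1

instance (t : ℚ) : Infinite {l // IsBlock t l} :=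
  Infinite.of_injective (fun n : ℕ => ⟨[t + n], by simp [IsBlock]⟩) fun m n h => by
    simpa using congrArg (fun l : {l // IsBlock t l} => l.1.headI) h

def blockCode (t : ℚ) : {l // IsBlock t l} ≃ ℕ :=
  nonempty_equiv_of_countable.some

abbrev blockThreshold : List ℚ → ℚ := fun l => l.headI + 1

abbrev IsBlockSeq (β : ℕ → List ℚ) : Prop := IsChainedSeq blockThreshold 0 IsBlock β

namespace IsBlockSeq

variable {β : ℕ → List ℚ}

lemma ne_nil (hβ : IsBlockSeq β) (k : ℕ) : β k ≠ [] := (hβ k).1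

lemma headI_mem (hβ : IsBlockSeq β) (k : ℕ) : (β k).headI ∈ β k := by
  obtain ⟨x, l, hl⟩ := List.exists_cons_of_ne_nil (hβ.ne_nil k)
  simp [hl]

lemma threshold_le_headI (hβ : IsBlockSeq β) (k : ℕ) :
    chainState blockThreshold 0 β k ≤ (β k).headI :=
  ((hβ k).2.2 _ (hβ.headI_mem k)).1

lemma natCast_le_threshold (hβ : IsBlockSeq β) (k : ℕ) :
    (k : ℚ) ≤ chainState blockThreshold 0 β k := by
  induction k with
  | zero => exact le_rfl
  | succ k ih =>
    have := hβ.threshold_le_headI k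
    push_cast
    change _ ≤ (β k).headI + 1
    linarith

lemma pairwise_prefixList_and_lt (hβ : IsBlockSeq β) (k : ℕ) :
    (prefixList β k).Pairwise (· < ·) ∧
      ∀ x ∈ prefixList β k, x < chainState blockThreshold 0 β k := by
  induction k with
  | zero => simp [prefixList]
  | succ k ih =>
    have hk := hβ.threshold_le_headI k
    rw [prefixList_succ, List.pairwise_append]
    refine ⟨⟨ih.1, (hβ k).2.1, fun x hx y hy => (ih.2 x hx).trans_le ((hβ k).2.2 y hy).1⟩,
      ?_⟩
    intro x hx
    rcases List.mem_append.mp hx with hx | hx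
    · exact (ih.2 x hx).trans_le (hk.trans (lt_add_one _).le)
    · exact ((hβ k).2.2 x hx).2

lemma concatSeq_length_prefixList (hβ : IsBlockSeq β) (k : ℕ) :
    concatSeq β (prefixList β k).length = (β k).headI := by
  have hlen : (prefixList β k).length < (prefixList β (k + 1)).length := by
    rw [prefixList_succ, List.length_append]
    have := List.length_pos_iff.mpr (hβ.ne_nil k)
    omega
  rw [concatSeq_eq_getElem hβ.ne_nil hlen]
  simp only [prefixList_succ, List.getElem_append_right le_rfl, Nat.sub_self]
  obtain ⟨x, l, hl⟩ := List.exists_cons_of_ne_nil (hβ.ne_nil k)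
  simp [hl]

lemma strictMono_concatSeq (hβ : IsBlockSeq β) : StrictMono (concatSeq β) := by
  intro i j hij
  have hj : j < (prefixList β (j + 1)).length := le_length_prefixList β hβ.ne_nil (j + 1)
  rw [concatSeq_eq_getElem hβ.ne_nil hj, concatSeq_eq_getElem hβ.ne_nil (hij.trans hj)]
  exact List.pairwise_iff_getElem.mp (hβ.pairwise_prefixList_and_lt (j + 1)).1 _ _ _ _ hij

lemma tendsto_concatSeq (hβ : IsBlockSeq β) : Tendsto (concatSeq β) atTop atTop := by
  refine tendsto_atTop_atTop_of_monotone hβ.strictMono_concatSeq.monotone fun b => ?_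
  obtain ⟨k, hk⟩ := exists_nat_ge b
  refine ⟨(prefixList β k).length, ?_⟩
  rw [hβ.concatSeq_length_prefixList]
  exact hk.trans ((hβ.natCast_le_threshold k).trans (hβ.threshold_le_headI k))

lemma concatSeq_nonneg (hβ : IsBlockSeq β) (n : ℕ) : 0 ≤ concatSeq β n := by
  have h0 := hβ.concatSeq_length_prefixList 0
  have := hβ.threshold_le_headI 0
  simp only [prefixList, List.range_zero, List.flatMap_nil, List.length_nil] at h0
  exact (h0 ▸ this).trans (hβ.strictMono_concatSeq.monotone (Nat.zero_le n))

end IsBlockSeq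

def concatZ (β : ℕ → List ℚ) (hβ : IsBlockSeq β) : Zsp :=
  ⟨concatSeq β, hβ.concatSeq_nonneg, hβ.strictMono_concatSeq, hβ.tendsto_concatSeq⟩

namespace Zsp

lemma exists_le (Q : Zsp) (c : ℚ) : ∃ n, c ≤ Q.1 n :=
  (Q.tendsto_atTop.eventually_ge_atTop c).exists

def blockStart (Q : Zsp) : ℕ → ℕ
  | 0 => 0
  | k + 1 => Nat.find (Q.exists_le (Q.1 (blockStart Q k) + 1))

lemma blockStart_succ_spec (Q : Zsp) (k : ℕ) :
    Q.1 (blockStart Q k) + 1 ≤ Q.1 (blockStart Q (k + 1)) :=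
  Nat.find_spec (Q.exists_le _)

lemma lt_of_lt_blockStart_succ (Q : Zsp) {k n : ℕ} (h : n < blockStart Q (k + 1)) :
    Q.1 n < Q.1 (blockStart Q k) + 1 :=
  not_le.mp (Nat.find_min (Q.exists_le _) h)

lemma strictMono_blockStart (Q : Zsp) : StrictMono (blockStart Q) :=
  strictMono_nat_of_lt_succ fun k => Q.strictMono.lt_iff_lt.mp
    ((lt_add_one _).trans_le (Q.blockStart_succ_spec k))

def blockOf (Q : Zsp) (k : ℕ) : List ℚ :=
  (List.range' (blockStart Q k) (blockStart Q (k + 1) - blockStart Q k)).map Q.1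

lemma prefixList_blockOf (Q : Zsp) (k : ℕ) :
    prefixList (blockOf Q) k = (List.range (blockStart Q k)).map Q.1 := by
  induction k with
  | zero => rfl
  | succ k ih =>
    have hk := (Q.strictMono_blockStart (lt_add_one k)).le
    have h := List.range'_append_1 (s := 0) (m := blockStart Q k)
      (n := blockStart Q (k + 1) - blockStart Q k)
    rw [Nat.zero_add, Nat.add_sub_cancel' hk] at h
    rw [prefixList_succ, ih, blockOf, ← List.map_append, List.range_eq_range',
      List.range_eq_range', h]

lemma headI_blockOf (Q : Zsp) (k : ℕ) : (blockOf Q k).headI = Q.1 (blockStart Q k) := by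
  obtain ⟨d, hd⟩ := Nat.exists_eq_add_of_lt (Q.strictMono_blockStart (lt_add_one k))
  rw [blockOf, show blockStart Q (k + 1) - blockStart Q k = d + 1 by omega, List.range'_succ]
  rfl

lemma isBlockSeq_blockOf (Q : Zsp) : IsBlockSeq (blockOf Q) := by
  intro k
  have hlt := Q.strictMono_blockStart (lt_add_one k)
  refine ⟨?_, ?_, ?_⟩
  · simp only [blockOf, ne_eq, List.map_eq_nil_iff, List.range'_eq_nil_iff]
    omega
  · exact (List.pairwise_map.mpr ((List.pairwise_lt_range' 1).imp fun h => Q.strictMono h))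
  · intro x hx
    obtain ⟨i, hi, rfl⟩ := List.mem_map.mp hx
    obtain ⟨hi₁, hi₂⟩ := List.mem_range'_1.mp hi
    rw [headI_blockOf]
    refine ⟨?_, Q.lt_of_lt_blockStart_succ (by omega)⟩
    cases k with
    | zero => exact Q.nonneg i
    | succ k =>
      change (blockOf Q k).headI + 1 ≤ _
      rw [headI_blockOf]
      exact (Q.blockStart_succ_spec k).trans (Q.strictMono.monotone hi₁)

lemma concatSeq_blockOf (Q : Zsp) : concatSeq (blockOf Q) = Q.1 := by
  funext n
  have hn : n < (prefixList (blockOf Q) (n + 1)).length := by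
    rw [prefixList_blockOf, List.length_map, List.length_range]
    exact (Q.strictMono_blockStart.id_le (n + 1))
  rw [concatSeq_eq_getElem Q.isBlockSeq_blockOf.ne_nil hn]
  simp [prefixList_blockOf]

lemma blockStart_concatZ {β : ℕ → List ℚ} (hβ : IsBlockSeq β) (k : ℕ) :
    blockStart (concatZ β hβ) k = (prefixList β k).length := by
  induction k with
  | zero => rfl
  | succ k ih =>
    refine (Nat.find_eq_iff _).mpr ⟨?_, fun n hn => ?_⟩
    · change concatSeq β _ + 1 ≤ concatSeq β _
      rw [ih, hβ.concatSeq_length_prefixList, hβ.concatSeq_length_prefixList]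
      exact hβ.threshold_le_headI (k + 1)
    · change ¬ concatSeq β _ + 1 ≤ concatSeq β n
      rw [ih, hβ.concatSeq_length_prefixList, not_le, concatSeq_eq_getElem hβ.ne_nil hn]
      exact (hβ.pairwise_prefixList_and_lt (k + 1)).2 _ (List.getElem_mem _)

lemma blockOf_concatZ {β : ℕ → List ℚ} (hβ : IsBlockSeq β) :
    blockOf (concatZ β hβ) = β := by
  funext k
  have hlen : (prefixList β (k + 1)).length = (prefixList β k).length + (β k).length := by
    rw [prefixList_succ, List.length_append]
  refine List.ext_getElem (by simp [blockOf, blockStart_concatZ, hlen]) fun i hi _ => ?_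
  have hi' : (prefixList β k).length + i < (prefixList β (k + 1)).length := by
    simp [blockOf, blockStart_concatZ, hlen] at hi
    omega
  simp only [blockOf, blockStart_concatZ, List.getElem_map, List.getElem_range'_1]
  change concatSeq β _ = _
  rw [concatSeq_eq_getElem hβ.ne_nil hi']
  simp [prefixList_succ, List.getElem_append_right]

def blockEquiv : Zsp ≃ {β // IsBlockSeq β} where
  toFun Q := ⟨blockOf Q, Q.isBlockSeq_blockOf⟩
  invFun β := concatZ β.1 β.2
  left_inv Q := Subtype.ext (concatSeq_blockOf Q)
  right_inv β := Subtype.ext (blockOf_concatZ β.2)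

lemma blockStart_congr {Q Q' : Zsp} {K : ℕ} (h : ∀ i ≤ blockStart Q K, Q'.1 i = Q.1 i) :
    ∀ k ≤ K, blockStart Q' k = blockStart Q k := by
  intro k hk
  induction k with
  | zero => rfl
  | succ k ih =>
    have hmono := Q.strictMono_blockStart.monotone
    have hk' : blockStart Q k ≤ blockStart Q K := hmono (by omega)
    refine (Nat.find_eq_iff _).mpr ⟨?_, fun n hn => ?_⟩
    · rw [ih (by omega), h _ hk', h _ (hmono hk)]
      exact Q.blockStart_succ_spec k
    · rw [ih (by omega), h _ hk', h _ (hn.le.trans (hmono hk)), not_le]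
      exact Q.lt_of_lt_blockStart_succ hn

lemma blockOf_congr {Q Q' : Zsp} {k : ℕ} (h : ∀ i ≤ blockStart Q (k + 1), Q'.1 i = Q.1 i) :
    ∀ j ≤ k, blockOf Q' j = blockOf Q j := by
  intro j hj
  have hstart := blockStart_congr h
  rw [blockOf, blockOf, hstart j (by omega), hstart (j + 1) (by omega)]
  refine List.map_congr_left fun i hi => h i ?_
  have := Q.strictMono_blockStart.monotone (show j + 1 ≤ k + 1 by omega)
  have := List.mem_range'_1.mp hi
  omega

def equivNatNat : Zsp ≃ (ℕ → ℕ) := blockEquiv.trans (chainEquiv blockThreshold 0 blockCode)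

lemma continuous_equivNatNat : Continuous equivNatNat := by
  refine continuous_pi fun k => IsLocallyConstant.continuous <|
    (IsLocallyConstant.iff_eventually_eq _).mpr fun Q => ?_
  filter_upwards [Metric.ball_mem_nhds Q
    (Real.rpow_pos_of_pos two_pos (-((Q.1 (blockStart Q (k + 1)) + 1 : ℚ) : ℝ)))] with Q' hQ'
  have hclose : dZ Q Q' ≤ _ := (dZ_comm Q Q').trans_le (le_of_lt hQ')
  exact chainEquiv_apply_congr _ _ _ fun j hj =>
    blockOf_congr (fun i hi => (eq_of_dZ_le_two_rpow_succ hclose i hi).symm) j hj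

lemma tendsto_two_rpow_neg (Q : Zsp) :
    Tendsto (fun n => (2 : ℝ) ^ (-(Q.1 n : ℝ))) atTop (𝓝 0) :=
  (tendsto_rpow_atBot_of_base_gt_one 2 one_lt_two).comp
    (tendsto_neg_atTop_atBot.comp (tendsto_ratCast_atTop_iff.mpr Q.tendsto_atTop))

lemma continuous_equivNatNat_symm : Continuous equivNatNat.symm := by
  refine continuous_iff_continuousAt.mpr fun a => Metric.tendsto_nhds.mpr fun ε hε => ?_
  set Q := equivNatNat.symm a
  obtain ⟨N, hN⟩ := (Q.tendsto_two_rpow_neg.eventually (gt_mem_nhds hε)).exists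
  have hcyl : ∀ᶠ a' in 𝓝 a, ∀ j ∈ Set.Iic N, a' j = a j :=
    (eventually_all_finite (Set.finite_Iic N)).mpr fun j _ =>
      (continuous_apply j).continuousAt.eventually_mem (isOpen_discrete {a j} |>.mem_nhds rfl)
  filter_upwards [hcyl] with a' ha'
  have hagree : ∀ i ≤ N, Q.1 i = (equivNatNat.symm a').1 i := fun i hi =>
    (concatSeq_congr fun j hj => chainDecode_congr _ _ _ ha' j (hj.trans hi)).symm
  rw [dist_comm]
  exact (dZ_le_of_forall_le_eq hagree).trans_lt hN

def homeomorphNatNat : Zsp ≃ₜ (ℕ → ℕ) where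
  toEquiv := equivNatNat
  continuous_toFun := continuous_equivNatNat
  continuous_invFun := continuous_equivNatNat_symm

def shiftedNat (c : ℚ) (hc : 0 ≤ c) : Zsp :=
  ⟨fun n => c + n, fun n => by positivity, fun m n h => by simpa using h,
    tendsto_atTop_add_const_left _ c tendsto_natCast_atTop_atTop⟩

lemma dZ_of_apply_zero_ne {Q Q' : Zsp} (h : Q.1 0 ≠ Q'.1 0) :
    dZ Q Q' = 2 ^ (-(min (Q.1 0) (Q'.1 0) : ℚ) : ℝ) := by
  have hQ : Q ≠ Q' := fun e => h (e ▸ rfl)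
  rw [dZ, if_neg hQ, Nat.sInf_eq_zero.mpr (Or.inl h)]

lemma exists_dZ_eq_two_rpow (c : ℚ) (hc : 0 ≤ c) :
    ∃ Q Q' : Zsp, dZ Q Q' = 2 ^ (-(c : ℝ)) := by
  refine ⟨shiftedNat c hc, shiftedNat (c + 1) (by linarith), ?_⟩
  rw [dZ_of_apply_zero_ne (by simp [shiftedNat])]
  simp [shiftedNat]

lemma exists_strictAnti_dZ_values_not_tendsto_zero :
    ∃ u : ℕ → ℝ, (∀ n, ∃ Q Q' : Zsp, dZ Q Q' = u n) ∧ StrictAnti u ∧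
      ¬ Tendsto u atTop (𝓝 0) := by
  set c : ℕ → ℚ := fun n => n / (n + 1)
  have hc_mono : StrictMono c := strictMono_nat_of_lt_succ fun n => by
    simp only [c]
    rw [div_lt_div_iff₀ (by positivity) (by positivity)]
    push_cast
    nlinarith
  have hc_le : ∀ n, c n ≤ 1 := fun n => div_le_one_of_le₀ (by linarith) (by positivity)
  refine ⟨fun n => 2 ^ (-(c n : ℝ)), fun n => exists_dZ_eq_two_rpow _ (by positivity),
    fun m n h => ?_, fun h => ?_⟩
  · exact Real.rpow_lt_rpow_of_exponent_lt one_lt_two (by simpa using hc_mono h)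
  · have hbound : ∀ n, (2 : ℝ) ^ (-(1 : ℝ)) ≤ 2 ^ (-(c n : ℝ)) := fun n =>
      Real.rpow_le_rpow_of_exponent_le one_le_two (by exact_mod_cast neg_le_neg (hc_le n))
    exact (Real.rpow_pos_of_pos two_pos _).not_ge (ge_of_tendsto' h hbound)

end Zsp

/-- `(Z, dZ)` is an ultrametric space, homeomorphic to the Baire space `ℕ → ℕ`, and is not a
discrete ultrametric space. -/
theorem Zsp_ultrametric_homeomorph_baire_not_discrete :
    ∃ m : MetricSpace Zsp,
      (∀ Q Q' : Zsp, m.dist Q Q' = dZ Q Q') ∧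
      (∀ Q Q' Q'' : Zsp, dZ Q Q'' ≤ max (dZ Q Q') (dZ Q' Q'')) ∧
      Nonempty (@Homeomorph Zsp (ℕ → ℕ) m.toUniformSpace.toTopologicalSpace inferInstance) ∧
      ¬ (∀ u : ℕ → ℝ, (∀ n, ∃ Q Q' : Zsp, dZ Q Q' = u n) →
          (∀ n, u (n + 1) < u n) → Tendsto u atTop (𝓝 0)) := by
  refine ⟨inferInstance, fun _ _ => rfl, Zsp.dZ_le_max, ⟨Zsp.homeomorphNatNat⟩, fun h => ?_⟩
  obtain ⟨u, hu, hanti, hnot⟩ := Zsp.exists_strictAnti_dZ_values_not_tendsto_zero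
  exact hnot (h u hu fun n => hanti (lt_add_one n))
end
end

section
/- Let X and Y be separable metrizable spaces with a fixed good basis of X, with Y zero-dimensional (Y has a basis of clopen sets), and let A ⊆ B_1(X,Y) be equipped with the pointwise convergence topology. If A is uniformly recoverable, then the evaluation map φ : X × A → Y, φ(x,f) = f(x), is Baire class one. -/
open Filter Topology Set Classical

noncomputable section
open scoped Classical

namespace EvalAux

def pathCand {X : Type*} (W : ℕ → Set X) (D : ℕ → X) (x : X) (n : ℕ) : Set ℕ :=
  {p | ∃ m, x ∈ W m ∧ D p ∈ W m ∧ ∀ k, k ≤ n → pathSeq W D x k ∉ W m}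

lemma pathSeq_zero {X : Type*} (W : ℕ → Set X) (D : ℕ → X) (x : X) : pathSeq W D x 0 = D 0 := by
  simp [pathSeq]

lemma pathSeq_succ {X : Type*} (W : ℕ → Set X) (D : ℕ → X) (x : X) (n : ℕ) :
    pathSeq W D x (n + 1) =
      if x = pathSeq W D x n then pathSeq W D x n else D (sInf (pathCand W D x n)) := by
  rw [pathSeq, pathCand]

variable {X : Type*} [TopologicalSpace X] {W : ℕ → Set X} {D : ℕ → X}

omit [TopologicalSpace X] in
lemma pathSeq_mem_range (W : ℕ → Set X) (D : ℕ → X) (x : X) (n : ℕ) :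
    ∃ p, D p = pathSeq W D x n := by
  induction n with
  | zero => exact ⟨0, (pathSeq_zero W D x).symm⟩
  | succ n ih =>
    rw [pathSeq_succ]
    split
    · exact ih
    · exact ⟨_, rfl⟩

lemma M_nonempty [T1Space X] (hW : TopologicalSpace.IsTopologicalBasis (Set.range W))
    (hD : DenseRange D) {x : X} {n : ℕ} (h : ∀ k ≤ n, pathSeq W D x k ≠ x) :
    (pathCand W D x n).Nonempty := by
  have hcl : IsClosed ((fun k => pathSeq W D x k) '' Set.Iic n) :=
    ((Set.finite_Iic n).image _).isClosed
  have hx : x ∈ ((fun k => pathSeq W D x k) '' Set.Iic n)ᶜ := by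
    rintro ⟨k, hk, hke⟩
    exact h k hk hke
  obtain ⟨v, hvb, hxv, hvs⟩ := hW.exists_subset_of_mem_open hx hcl.isOpen_compl
  obtain ⟨m, rfl⟩ := hvb
  obtain ⟨p, hp⟩ := hD.exists_mem_open (hW.isOpen ⟨m, rfl⟩) ⟨x, hxv⟩
  exact ⟨p, m, hxv, hp, fun k hk hmem => hvs hmem ⟨k, hk, rfl⟩⟩

lemma pathSeq_ne [T1Space X] (hW : TopologicalSpace.IsTopologicalBasis (Set.range W))
    (hD : DenseRange D) {x : X} (hns : ∀ n, x ≠ pathSeq W D x n)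
    {k n : ℕ} (hkn : k < n) : pathSeq W D x k ≠ pathSeq W D x n := by
  obtain ⟨r, rfl⟩ : ∃ r, n = r + 1 := ⟨n - 1, by omega⟩
  have hM := M_nonempty (n := r) hW hD (fun k _ => (hns k).symm)
  obtain ⟨m, hxm, hDm, hh⟩ := Nat.sInf_mem hM
  rw [pathSeq_succ, if_neg (hns r)]
  intro hcon
  exact hh k (by omega) (hcon ▸ hDm)

lemma step [T1Space X] (hW : TopologicalSpace.IsTopologicalBasis (Set.range W))
    (hD : DenseRange D) {x : X} {n : ℕ} (hne : x ≠ pathSeq W D x n)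
    (hhist : ∀ k ≤ n, pathSeq W D x k ≠ x) :
    ∃ m π, D π = pathSeq W D x (n + 1) ∧ D π ∈ W m ∧ x ∈ W m ∧
      (∀ p < π, D p ∉ W m) ∧ ∀ k ≤ n, pathSeq W D x k ∉ W m := by
  have hM := M_nonempty hW hD hhist
  obtain ⟨m, hxm, hDm, hh⟩ := Nat.sInf_mem hM
  refine ⟨m, sInf (pathCand W D x n), ?_, hDm, hxm, ?_, hh⟩
  · rw [pathSeq_succ, if_neg hne]
  · intro p hp hpW
    exact Nat.notMem_of_lt_sInf hp ⟨m, hxm, hpW, hh⟩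

lemma hits [T1Space X] (hW : TopologicalSpace.IsTopologicalBasis (Set.range W))
    (hD : DenseRange D) {y : X} {m π : ℕ}
    (hπm : D π ∈ W m) (hmin : ∀ p < π, D p ∉ W m) (h0 : D 0 ∉ W m) (hy : y ∈ W m)
    (hns : ∀ n, y ≠ pathSeq W D y n) : ∃ j, pathSeq W D y j = D π := by
  by_contra hno
  push_neg at hno
  have heq : ∀ r, pathSeq W D y (r + 1) = D (sInf (pathCand W D y r)) := fun r => by
    rw [pathSeq_succ, if_neg (hns r)]
  have hQ : ∀ r, ∀ k ≤ r, pathSeq W D y k ∉ W m := by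
    intro r
    induction r with
    | zero =>
      intro k hk
      have : k = 0 := by omega
      subst this
      rw [pathSeq_zero]; exact h0
    | succ r IH =>
      intro k hk
      by_cases hk' : k ≤ r
      · exact IH k hk'
      · have hk2 : k = r + 1 := by omega
        subst hk2
        have hπM : π ∈ pathCand W D y r := ⟨m, hy, hπm, fun k hk => IH k hk⟩
        have hle := Nat.sInf_le hπM
        rw [heq r]
        intro hmem
        rcases lt_or_eq_of_le hle with h | h
        · exact hmin _ h hmem
        · exact hno (r + 1) (by rw [heq r, h])
  have hbd : ∀ r, sInf (pathCand W D y r) ≤ π := fun r =>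
    Nat.sInf_le ⟨m, hy, hπm, fun k hk => hQ r k hk⟩
  have hinj : Function.Injective fun r => sInf (pathCand W D y r) := by
    intro a b hab
    by_contra hne
    have hpp : pathSeq W D y (a + 1) = pathSeq W D y (b + 1) := by
      rw [heq a, heq b]; exact congrArg D hab
    rcases Nat.lt_or_ge a b with h | h
    · exact pathSeq_ne hW hD hns (by omega : a + 1 < b + 1) hpp
    · have h' : b < a := by omega
      exact pathSeq_ne hW hD hns (by omega : b + 1 < a + 1) hpp.symm
  exact Set.infinite_range_of_injective hinj
    ((Set.finite_Iic π).subset (by rintro _ ⟨r, rfl⟩; exact hbd r))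

omit [TopologicalSpace X] in
lemma stab_after {x : X} {n : ℕ} (h : x = pathSeq W D x n) :
    ∀ k, n ≤ k → pathSeq W D x k = x := by
  intro k hk
  induction k, hk using Nat.le_induction with
  | base => exact h.symm
  | succ k hk IH => rw [pathSeq_succ, if_pos IH.symm]; exact IH

end EvalAux

-- continuing inside namespace EvalAux (appended for test)
namespace EvalAux

lemma isClosed_isFsigma {Z : Type*} [TopologicalSpace Z] {s : Set Z} (h : IsClosed s) :
    IsFsigma s :=
  ⟨fun _ => s, fun _ => h, (Set.iUnion_const s).symm⟩

lemma isFsigma_iUnion_countable {Z ι : Type*} [TopologicalSpace Z] [Countable ι]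
    {s : ι → Set Z} (h : ∀ i, IsFsigma (s i)) : IsFsigma (⋃ i, s i) := by
  rcases isEmpty_or_nonempty ι with hι | hι
  · rw [Set.iUnion_of_empty]
    exact isClosed_isFsigma isClosed_empty
  · obtain ⟨e, he⟩ := exists_surjective_nat ι
    choose F hFc hFe using h
    refine ⟨fun k => F (e k.unpair.1) k.unpair.2, fun k => hFc _ _, ?_⟩
    ext z
    simp only [Set.mem_iUnion]
    constructor
    · rintro ⟨i, hi⟩
      rw [hFe i] at hi
      obtain ⟨n, hn⟩ := Set.mem_iUnion.mp hi
      obtain ⟨a, rfl⟩ := he i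
      exact ⟨Nat.pair a n, by simpa [Nat.unpair_pair] using hn⟩
    · rintro ⟨k, hk⟩
      exact ⟨e k.unpair.1, by rw [hFe]; exact Set.mem_iUnion.2 ⟨_, hk⟩⟩

def PieceIdx : Type := ℕ ⊕ (Σ q : ℕ, (Fin q → ℕ) × (Fin q → Bool) × (Fin q → ℕ))

instance : Countable PieceIdx := by unfold PieceIdx; infer_instance
instance : Nonempty PieceIdx := ⟨Sum.inl 0⟩

def piece {X Y : Type*} (W : ℕ → Set X) (D : ℕ → X) (A : Set (X → Y)) (C : Set Y) :
    PieceIdx → Set (X × ↥A)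
  | Sum.inl p => {z | z.1 = D p ∧ (z.2 : X → Y) (D p) ∈ C}
  | Sum.inr ⟨q, σ, E, kf⟩ =>
      {z | (∀ n, z.1 ≠ pathSeq W D z.1 n) ∧
           (∀ j : Fin q, pathSeq W D z.1 (j : ℕ) = D (σ j)) ∧
           (∀ n, q ≤ n → (z.2 : X → Y) (pathSeq W D z.1 n) ∈ C) ∧
           (∀ j : Fin q, ((z.2 : X → Y) (D (σ j)) ∈ C ↔ E j = true)) ∧
           (∀ j : Fin q, E j = false → D (σ j) ∈ W (kf j) ∧ z.1 ∉ W (kf j))}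

lemma continuous_evalAt {X Y : Type*} [TopologicalSpace X] [TopologicalSpace Y]
    (A : Set (X → Y)) (x : X) :
    Continuous (fun z : X × ↥A => (z.2 : X → Y) x) :=
  ((continuous_apply x).comp continuous_subtype_val).comp continuous_snd

end EvalAux

namespace EvalAux

variable {X Y : Type*} [TopologicalSpace X] [TopologicalSpace Y]

lemma piece_inr_subset [T1Space X] {W : ℕ → Set X} {D : ℕ → X} {A : Set (X → Y)}
    {C : Set Y} (hC : IsClopen C)
    (hrec : ∀ f ∈ A, RecoverableWith W D f)
    (t : Σ q : ℕ, (Fin q → ℕ) × (Fin q → Bool) × (Fin q → ℕ)) :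
    piece W D A C (Sum.inr t) ⊆ {z : X × ↥A | (z.2 : X → Y) z.1 ∈ C} := by
  obtain ⟨q, σ, E, kf⟩ := t
  rintro ⟨y, g⟩ ⟨-, -, htail, -, -⟩
  have hten := hrec _ g.2 y
  refine hC.isClosed.mem_of_tendsto hten ?_
  filter_upwards [Filter.eventually_ge_atTop q] with n hn
  exact htail n hn

lemma closure_piece_inr_subset [T1Space X] {W : ℕ → Set X} {D : ℕ → X}
    (hW : TopologicalSpace.IsTopologicalBasis (Set.range W)) (hD : DenseRange D)
    {A : Set (X → Y)} {C : Set Y} (hC : IsClopen C)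
    (hrec : ∀ f ∈ A, RecoverableWith W D f)
    (t : Σ q : ℕ, (Fin q → ℕ) × (Fin q → Bool) × (Fin q → ℕ)) :
    closure (piece W D A C (Sum.inr t)) ⊆ {z : X × ↥A | (z.2 : X → Y) z.1 ∈ C} := by
  obtain ⟨q, σ, E, kf⟩ := t
  rintro ⟨x, f⟩ hz
  by_contra hfC
  have hten := hrec _ f.2 x
  have hev : ∀ᶠ n in Filter.atTop, (f : X → Y) (pathSeq W D x n) ∈ Cᶜ :=
    hten.eventually_mem (hC.isClosed.isOpen_compl.mem_nhds hfC)
  obtain ⟨N₀, hN₀⟩ := Filter.eventually_atTop.mp hev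
  set N := max q N₀ with hN
  by_cases hstab : ∃ n, x = pathSeq W D x n
  · -- the path of x stabilizes at x
    have hkey : ∃ V : Set X, IsOpen V ∧ x ∈ V ∧
        ∀ y, y ∈ V → (∀ n, y ≠ pathSeq W D y n) → ∃ j, pathSeq W D y j = x := by
      set n₀ := Nat.find hstab with hn₀
      have hx0 : x = pathSeq W D x n₀ := Nat.find_spec hstab
      rcases Nat.eq_zero_or_pos n₀ with h0 | hpos
      · refine ⟨Set.univ, isOpen_univ, trivial, fun y _ _ => ⟨0, ?_⟩⟩
        rw [h0] at hx0
        rw [pathSeq_zero] at hx0 ⊢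
        exact hx0.symm
      · obtain ⟨n, hn⟩ : ∃ n, n₀ = n + 1 := ⟨n₀ - 1, by omega⟩
        have hne : x ≠ pathSeq W D x n := Nat.find_min hstab (by omega)
        have hhist : ∀ k ≤ n, pathSeq W D x k ≠ x := fun k hk hcon =>
          (Nat.find_min hstab (show k < n₀ by omega)) hcon.symm
        obtain ⟨m, π, heq, hDm, hxm, hmin, hh⟩ := step hW hD hne hhist
        have hDπ : D π = x := by rw [heq, ← hn, ← hx0]
        refine ⟨W m, hW.isOpen ⟨m, rfl⟩, hxm, fun y hy hyns => ?_⟩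
        have h0' : D 0 ∉ W m := by
          have := hh 0 (Nat.zero_le n)
          rwa [pathSeq_zero] at this
        obtain ⟨j, hj⟩ := hits hW hD hDm hmin h0' hy hyns
        exact ⟨j, by rw [hj, hDπ]⟩
    obtain ⟨V, hVo, hxV, hVhit⟩ := hkey
    set V' : Set X := V ∩ ⋂ j : Fin q,
      (if E j = false ∧ D (σ j) = x ∧ x ∈ W (kf j) then W (kf j) else Set.univ) with hV'
    have hV'o : IsOpen V' := by
      refine hVo.inter (isOpen_iInter_of_finite fun j => ?_)
      split_ifs
      · exact hW.isOpen ⟨_, rfl⟩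
      · exact isOpen_univ
    have hxV' : x ∈ V' := by
      refine ⟨hxV, Set.mem_iInter.2 fun j => ?_⟩
      split_ifs with h
      · exact h.2.2
      · trivial
    set O : Set (X × ↥A) := Prod.fst ⁻¹' V' ∩
      (fun w : X × ↥A => (w.2 : X → Y) x) ⁻¹' Cᶜ with hO
    have hOo : IsOpen O :=
      (hV'o.preimage continuous_fst).inter
        (hC.isClosed.isOpen_compl.preimage (continuous_evalAt A x))
    have hzO : (⟨x, f⟩ : X × ↥A) ∈ O := ⟨hxV', hfC⟩
    obtain ⟨w, hwO, hwP⟩ := mem_closure_iff.mp hz O hOo hzO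
    obtain ⟨hyns, hpat, htail, hpatE, hkcond⟩ := hwP
    obtain ⟨j, hj⟩ := hVhit w.1 hwO.1.1 hyns
    rcases Nat.lt_or_ge j q with hjq | hjq
    · set jj : Fin q := ⟨j, hjq⟩
      have hDx : D (σ jj) = x := by rw [← hpat jj]; exact hj
      have hgx : (w.2 : X → Y) x ∉ C := hwO.2
      have hE : E jj = false := by
        rcases Bool.eq_false_or_eq_true (E jj) with h | h
        · exact absurd (hDx ▸ (hpatE jj).2 h) hgx
        · exact h
      obtain ⟨hDk, hyk⟩ := hkcond jj hE
      have hxk : x ∈ W (kf jj) := hDx ▸ hDk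
      have hmem := Set.mem_iInter.mp hwO.1.2 jj
      rw [if_pos ⟨hE, hDx, hxk⟩] at hmem
      exact hyk hmem
    · have := htail j hjq
      rw [hj] at this
      exact hwO.2 this
  · push_neg at hstab
    have hstep : ∀ i : Fin (q + 1), ∃ m π, D π = pathSeq W D x (N + i + 1) ∧ D π ∈ W m ∧
        x ∈ W m ∧ (∀ p < π, D p ∉ W m) ∧ ∀ k ≤ N + i, pathSeq W D x k ∉ W m :=
      fun i => step hW hD (hstab (N + i)) (fun k _ => (hstab k).symm)
    choose m π heq hDW hxW hmin hhist using hstep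
    set O : Set (X × ↥A) := Prod.fst ⁻¹' (⋂ i : Fin (q + 1), W (m i)) ∩
      ⋂ i : Fin (q + 1),
        (fun w : X × ↥A => (w.2 : X → Y) (pathSeq W D x (N + i + 1))) ⁻¹' Cᶜ with hO
    have hOo : IsOpen O := by
      refine IsOpen.inter ?_ ?_
      · exact (isOpen_iInter_of_finite fun i => hW.isOpen ⟨m i, rfl⟩).preimage continuous_fst
      · exact isOpen_iInter_of_finite fun i =>
          hC.isClosed.isOpen_compl.preimage (continuous_evalAt A _)
    have hzO : (⟨x, f⟩ : X × ↥A) ∈ O := by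
      refine ⟨Set.mem_iInter.2 fun i => hxW i, Set.mem_iInter.2 fun i => ?_⟩
      exact hN₀ (N + i + 1) (by omega)
    obtain ⟨w, hwO, hwP⟩ := mem_closure_iff.mp hz O hOo hzO
    obtain ⟨hyns, hpat, htail, hpatE, hkcond⟩ := hwP
    have hhits : ∀ i : Fin (q + 1), ∃ j, pathSeq W D w.1 j = pathSeq W D x (N + i + 1) := by
      intro i
      have h0' : D 0 ∉ W (m i) := by
        have := hhist i 0 (Nat.zero_le _)
        rwa [pathSeq_zero] at this
      have hyWm : w.1 ∈ W (m i) := Set.mem_iInter.mp hwO.1 i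
      obtain ⟨j, hj⟩ := hits hW hD (hDW i) (hmin i) h0' hyWm hyns
      exact ⟨j, by rw [hj, heq i]⟩
    choose j hj using hhits
    have hjinj : Function.Injective j := by
      intro a b hab
      by_contra hne
      have hpp : pathSeq W D x (N + a + 1) = pathSeq W D x (N + b + 1) := by
        rw [← hj a, ← hj b, hab]
      have hvne : (a : ℕ) ≠ (b : ℕ) := fun h => hne (Fin.ext h)
      rcases Nat.lt_or_ge (a : ℕ) (b : ℕ) with h | h
      · exact pathSeq_ne hW hD hstab (show N + a + 1 < N + b + 1 by omega) hpp
      · have h' : (b : ℕ) < (a : ℕ) := by omega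
        exact pathSeq_ne hW hD hstab (show N + b + 1 < N + a + 1 by omega) hpp.symm
    have hex : ∃ i, q ≤ j i := by
      by_contra hall
      push_neg at hall
      have hinj2 : Function.Injective (fun i : Fin (q + 1) => (⟨j i, hall i⟩ : Fin q)) :=
        fun a b hab => hjinj (by simpa using congrArg Fin.val hab)
      have := Fintype.card_le_of_injective _ hinj2
      simp [Fintype.card_fin] at this
    obtain ⟨i, hi⟩ := hex
    have h1 := htail (j i) hi
    rw [hj i] at h1
    exact (Set.mem_iInter.mp hwO.2 i) h1

lemma main_clopen [T1Space X] {W : ℕ → Set X} {D : ℕ → X}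
    (hW : TopologicalSpace.IsTopologicalBasis (Set.range W)) (hD : DenseRange D)
    {A : Set (X → Y)} (hrec : ∀ f ∈ A, RecoverableWith W D f)
    {C : Set Y} (hC : IsClopen C) :
    IsFsigma {z : X × ↥A | (z.2 : X → Y) z.1 ∈ C} := by
  have htarget : {z : X × ↥A | (z.2 : X → Y) z.1 ∈ C} =
      ⋃ i : PieceIdx, closure (piece W D A C i) := by
    apply subset_antisymm
    · -- covering
      rintro ⟨y, g⟩ hyg
      by_cases hstab : ∃ n, y = pathSeq W D y n
      · obtain ⟨n, hn⟩ := hstab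
        obtain ⟨p, hp⟩ := pathSeq_mem_range W D y n
        refine Set.mem_iUnion.2 ⟨Sum.inl p, subset_closure ?_⟩
        have hpy : D p = y := by rw [hp, ← hn]
        exact ⟨hpy.symm, by rw [hpy]; exact hyg⟩
      · push_neg at hstab
        have hten := hrec _ g.2 y
        obtain ⟨q, hq⟩ := Filter.eventually_atTop.mp
          (hten.eventually_mem (hC.isOpen.mem_nhds hyg))
        choose σ hσ using fun j : Fin q => pathSeq_mem_range W D y (j : ℕ)
        have hkex : ∀ j : Fin q, ∃ kk, D (σ j) ∈ W kk ∧ y ∉ W kk := by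
          intro j
          have hne : D (σ j) ∈ ({y}ᶜ : Set X) := by
            simp only [Set.mem_compl_iff, Set.mem_singleton_iff]
            rw [hσ j]
            exact fun h => hstab (j : ℕ) h.symm
          obtain ⟨v, hvb, hin, hsub⟩ :=
            hW.exists_subset_of_mem_open hne isClosed_singleton.isOpen_compl
          obtain ⟨kk, rfl⟩ := hvb
          exact ⟨kk, hin, fun hyW => hsub hyW rfl⟩
        choose kf hk1 hk2 using hkex
        refine Set.mem_iUnion.2 ⟨Sum.inr ⟨q, σ,
          fun j => if (g : X → Y) (D (σ j)) ∈ C then true else false, kf⟩,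
          subset_closure ?_⟩
        refine ⟨hstab, fun j => (hσ j).symm, fun n hn => hq n hn, fun j => ?_,
          fun j hEj => ⟨hk1 j, hk2 j⟩⟩
        by_cases h : (g : X → Y) (D (σ j)) ∈ C <;> simp [h]
    · refine Set.iUnion_subset fun i => ?_
      match i with
      | Sum.inl p =>
        have hcl : IsClosed (piece W D A C (Sum.inl p)) := by
          have : piece W D A C (Sum.inl p) =
              Prod.fst ⁻¹' {D p} ∩ (fun w : X × ↥A => (w.2 : X → Y) (D p)) ⁻¹' C := rfl
          rw [this]
          exact (isClosed_singleton.preimage continuous_fst).inter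
            (hC.isClosed.preimage (continuous_evalAt A _))
        rw [hcl.closure_eq]
        rintro ⟨y, g⟩ ⟨h1, h2⟩
        simp only [] at h1 h2 ⊢
        show (g : X → Y) y ∈ C
        rw [show y = D p from h1]
        exact h2
      | Sum.inr t => exact closure_piece_inr_subset hW hD hC hrec t
  rw [htarget]
  exact isFsigma_iUnion_countable fun i => isClosed_isFsigma isClosed_closure

end EvalAux

/-- If `Y` is zero-dimensional and `A ⊆ B₁(X,Y)` (with the pointwise convergence topology)
is uniformly recoverable, then the evaluation map `φ(x,f) = f(x)` is Baire class one. -/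
theorem eval_baireClassOne_of_uniformlyRecoverable {X Y : Type*}
    [TopologicalSpace X] [TopologicalSpace.SeparableSpace X] [TopologicalSpace.MetrizableSpace X]
    [TopologicalSpace Y] [TopologicalSpace.SeparableSpace Y] [TopologicalSpace.MetrizableSpace Y]
    (hY : TopologicalSpace.IsTopologicalBasis {s : Set Y | IsClopen s})
    (W : ℕ → Set X) (hW : IsGoodBasis W)
    (A : Set (X → Y)) (hA : ∀ f ∈ A, BaireClassOneFn f)
    (hur : ∃ D : ℕ → X, DenseRange D ∧ ∀ f ∈ A, RecoverableWith W D f) :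
    BaireClassOneFn (fun p : X × ↥A => (p.2 : X → Y) p.1) := by
  classical
  obtain ⟨D, hD, hrec⟩ := hur
  letI : MetricSpace X := TopologicalSpace.metrizableSpaceMetric X
  letI : MetricSpace Y := TopologicalSpace.metrizableSpaceMetric Y
  haveI : SecondCountableTopology Y := UniformSpace.secondCountable_of_separable Y
  intro U hU
  obtain ⟨S, hSsub, hSU⟩ := hY.open_eq_sUnion hU
  obtain ⟨T, hTc, hTS, hTU⟩ := TopologicalSpace.isOpen_sUnion_countable S fun s hs => (hSsub hs).isOpen
  have hUeq : U = ⋃₀ T := by rw [hTU, ← hSU]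
  have hpre : (fun p : X × ↥A => (p.2 : X → Y) p.1) ⁻¹' U =
      ⋃ t : T, {z : X × ↥A | (z.2 : X → Y) z.1 ∈ (t : Set Y)} := by
    rw [hUeq]
    ext z
    simp [Set.mem_sUnion]
  rw [hpre]
  haveI : Countable T := hTc.to_subtype
  exact EvalAux.isFsigma_iUnion_countable fun t =>
    EvalAux.main_clopen hW.1 hD hrec (hSsub (hTS t.2))
end
end

section
/- Let X be a nonempty perfect Polish space with a fixed good basis, let (x_p) be a dense sequence of X, and let Y = 2 = {0,1} ⊆ ℝ. Then sup{L(f) : f : X → 2 is recoverable with respect to (x_p)} = ω₁; that is, for every countable ordinal ξ there is a function f : X → 2 recoverable with respect to (x_p) with L(f) > ξ. -/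
open Filter Topology Set Classical

noncomputable section
open scoped Classical

/-- `(G α)_{α ≤ β}` witnesses the Bourgain separation of the disjoint sets `A` and `B` :
an increasing transfinite sequence of open sets such that successive differences miss `A`
or `B`, continuous at limits, starting at `∅` and ending at `univ`. -/
def IsBourgainSeq {X : Type*} [TopologicalSpace X] (A B : Set X) (β : Ordinal)
    (G : Ordinal → Set X) : Prop :=
  (∀ α ≤ β, IsOpen (G α)) ∧
  (∀ α γ : Ordinal, α ≤ γ → γ ≤ β → G α ⊆ G γ) ∧
  (∀ α < β, (G (α + 1) \ G α) ∩ A = ∅ ∨ (G (α + 1) \ G α) ∩ B = ∅) ∧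
  (∀ γ ≤ β, Order.IsSuccLimit γ → G γ = ⋃ α < γ, G α) ∧
  G 0 = ∅ ∧ G β = Set.univ

/-- Bourgain's rank `L(A,B)` : the least countable length of a Bourgain sequence
separating `A` from `B`. -/
noncomputable def rankL {X : Type*} [TopologicalSpace X] (A B : Set X) : Ordinal :=
  sInf {β : Ordinal | β < (Cardinal.aleph 1).ord ∧ ∃ G : Ordinal → Set X, IsBourgainSeq A B β G}

/-- Bourgain's rank of a real-valued function :
`L(f) = sup {L({f ≤ q₁}, {f ≥ q₂}) | q₁ < q₂ rationals}`. -/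
noncomputable def rankLf {X : Type*} [TopologicalSpace X] (f : X → ℝ) : Ordinal :=
  sSup {o : Ordinal | ∃ q₁ q₂ : ℚ, q₁ < q₂ ∧
    o = rankL {x | f x ≤ (q₁ : ℝ)} {x | (q₂ : ℝ) ≤ f x}}

/-!
For `ξ < ω₁` we build inside `range D` a closed labelled tree of rank `ξ`: a root together with
subtrees of every smaller rank and of either label, rooted at points of `D` that converge
geometrically fast to the root. Let `f` be the indicator of the positively labelled points. Its
discontinuities lie in `range D`, where the path `pathSeq` is eventually constant, and everywhere
else `pathSeq` converges, so `f` is recoverable. The root lies in the `ξ`-th two-sided derived set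
of `{f = 1}`, which no Bourgain sequence of length `≤ ξ` can avoid. A Bourgain sequence of countable
length does exist, because the closure of `{f = 1}` is countable: once its complement is covered,
one isolated point of the countable closed remainder is added at a time.
-/

universe u

section PathSeq

variable {X : Type*} (W : ℕ → Set X) (D : ℕ → X)

def pathCandidates (x : X) (n : ℕ) : Set ℕ :=
  {p | ∃ m, x ∈ W m ∧ D p ∈ W m ∧ ∀ k, k ≤ n → pathSeq W D x k ∉ W m}

variable {W D} {x : X}

theorem pathSeq_succ (x : X) (n : ℕ) :
    pathSeq W D x (n + 1) =
      if x = pathSeq W D x n then pathSeq W D x n else D (sInf (pathCandidates W D x n)) := by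
  rw [pathSeq, pathCandidates]

theorem pathSeq_eq_of_le {n m : ℕ} (h : pathSeq W D x n = x) (hnm : n ≤ m) :
    pathSeq W D x m = x := by
  induction m, hnm using Nat.le_induction with
  | base => exact h
  | succ k _ ih => rw [pathSeq_succ, if_pos ih.symm, ih]

variable [TopologicalSpace X] [T1Space X]

theorem exists_basis_avoiding_pathSeq (hW : IsGoodBasis W) {n : ℕ}
    (hx : ∀ k ≤ n, pathSeq W D x k ≠ x) : ∃ m, x ∈ W m ∧ ∀ k ≤ n, pathSeq W D x k ∉ W m := by
  have hopen : IsOpen (pathSeq W D x '' Iic n)ᶜ := ((finite_Iic n).image _).isClosed.isOpen_compl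
  have hxmem : x ∈ (pathSeq W D x '' Iic n)ᶜ := by
    rintro ⟨k, hk, hkx⟩
    exact hx k hk hkx
  obtain ⟨_, ⟨m, rfl⟩, hxm, hsub⟩ := hW.1.exists_subset_of_mem_open hxmem hopen
  exact ⟨m, hxm, fun k hk hkm => hsub hkm ⟨k, hk, rfl⟩⟩

theorem pathSeq_succ_spec (hW : IsGoodBasis W) (hD : DenseRange D) {n : ℕ}
    (h : pathSeq W D x n ≠ x) :
    pathSeq W D x (n + 1) = D (sInf (pathCandidates W D x n)) ∧
      ∃ m, x ∈ W m ∧ pathSeq W D x (n + 1) ∈ W m ∧ ∀ k ≤ n, pathSeq W D x k ∉ W m := by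
  have hsucc : pathSeq W D x (n + 1) = D (sInf (pathCandidates W D x n)) := by
    rw [pathSeq_succ, if_neg (Ne.symm h)]
  obtain ⟨m, hxm, havoid⟩ :=
    exists_basis_avoiding_pathSeq hW fun k hk hkx => h (pathSeq_eq_of_le hkx hk)
  obtain ⟨p, hp⟩ := hD.exists_mem_open (hW.1.isOpen ⟨m, rfl⟩) ⟨x, hxm⟩
  obtain ⟨m', hxm', hm', havoid'⟩ :=
    Nat.sInf_mem (s := pathCandidates W D x n) ⟨p, m, hxm, hp, havoid⟩
  exact ⟨hsucc, m', hxm', hsucc ▸ hm', havoid'⟩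

theorem tendsto_pathSeq (hW : IsGoodBasis W) (hD : DenseRange D) (x : X) :
    Tendsto (pathSeq W D x) atTop (𝓝 x) := by
  refine (tendsto_add_atTop_iff_nat 1).mp (tendsto_nhds.mpr fun U hU hxU => ?_)
  obtain ⟨m₀, hm₀⟩ := hW.2 U hU x hxU
  -- a step that leaves `U` uses a basic set of index `< m₀`, and never the same one twice
  set bad : Set ℕ := {n | pathSeq W D x n ≠ x ∧ pathSeq W D x (n + 1) ∉ U}
  have hwit : ∀ n ∈ bad, ∃ m < m₀, pathSeq W D x (n + 1) ∈ W m ∧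
      ∀ k ≤ n, pathSeq W D x k ∉ W m := by
    rintro n ⟨hn, hnU⟩
    obtain ⟨m, hxm, hm, havoid⟩ := (pathSeq_succ_spec hW hD hn).2
    exact ⟨m, not_le.mp fun hle => hnU (hm₀ m hle hxm hm), hm, havoid⟩
  choose! wit hwit_lt hwit_mem hwit_avoid using hwit
  have hinj : InjOn wit bad := by
    intro a ha b hb hab
    by_contra hne
    rcases Nat.lt_or_gt_of_ne hne with hlt | hlt
    · exact hwit_avoid b hb (a + 1) hlt (hab ▸ hwit_mem a ha)
    · exact hwit_avoid a ha (b + 1) hlt (hab ▸ hwit_mem b hb)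
  have hfin : bad.Finite :=
    ((finite_Iio m₀).subset (image_subset_iff.mpr hwit_lt)).of_finite_image hinj
  filter_upwards [Nat.cofinite_eq_atTop ▸ hfin.eventually_cofinite_notMem] with n hn
  by_cases hxn : pathSeq W D x n = x
  · simpa [pathSeq_eq_of_le hxn n.le_succ] using hxU
  · by_contra hU'
    exact hn ⟨hxn, hU'⟩

theorem pathSeq_eventually_eq (hW : IsGoodBasis W) (hD : DenseRange D)
    (hx : x ∈ range D) : ∀ᶠ n in atTop, pathSeq W D x n = x := by
  obtain ⟨p₀, rfl⟩ := hx
  suffices ∃ n, pathSeq W D (D p₀) n = D p₀ by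
    obtain ⟨n, hn⟩ := this
    exact eventually_atTop.mpr ⟨n, fun m hm => pathSeq_eq_of_le hn hm⟩
  by_contra! hne
  -- otherwise the successive indices are distinct naturals below `p₀`
  set q : ℕ → ℕ := fun n => sInf (pathCandidates W D (D p₀) n)
  have hq : ∀ n, pathSeq W D (D p₀) (n + 1) = D (q n) := fun n =>
    (pathSeq_succ_spec hW hD (hne n)).1
  have hq_lt : ∀ n, q n < p₀ := by
    intro n
    obtain ⟨m, hxm, havoid⟩ := exists_basis_avoiding_pathSeq (n := n) hW fun k _ => hne k
    have hp₀ : p₀ ∈ pathCandidates W D (D p₀) n := ⟨m, hxm, hxm, havoid⟩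
    refine (Nat.sInf_le hp₀).lt_of_ne fun h => hne (n + 1) ?_
    rw [hq, ← h]
  have hq_ne : ∀ a b, a < b → q a ≠ q b := by
    intro a b hab hqab
    obtain ⟨m, -, hm, havoid⟩ := (pathSeq_succ_spec hW hD (hne b)).2
    exact havoid (a + 1) hab (by rwa [hq, hqab, ← hq])
  have hq_inj : Function.Injective q := fun a b hab => by
    by_contra hne
    rcases Nat.lt_or_gt_of_ne hne with h | h
    exacts [hq_ne a b h hab, hq_ne b a h hab.symm]
  exact (infinite_of_injective_forall_mem hq_inj hq_lt).mono subset_rfl (finite_Iio p₀)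

variable {Y : Type*} [TopologicalSpace Y]

theorem recoverableWith_of_continuousAt (hW : IsGoodBasis W) (hD : DenseRange D)
    {f : X → Y} (hf : ∀ x ∉ range D, ContinuousAt f x) : RecoverableWith W D f := by
  intro x
  by_cases hx : x ∈ range D
  · exact tendsto_const_nhds.congr'
      ((pathSeq_eventually_eq hW hD hx).mono fun n hn => congrArg f hn.symm)
  · exact (hf x hx).tendsto.comp (tendsto_pathSeq hW hD x)

theorem recoverableWith_indicator [Zero Y] (hW : IsGoodBasis W) (hD : DenseRange D) {S : Set X}
    (hS : closure S ⊆ range D) (g : X → Y) : RecoverableWith W D (S.indicator g) := by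
  refine recoverableWith_of_continuousAt hW hD fun x hx => (continuousAt_const (y := 0)).congr ?_
  filter_upwards [isClosed_closure.isOpen_compl.mem_nhds fun h => hx (hS h)] with y hy
  exact (indicator_of_notMem (fun h => hy (subset_closure h)) g).symm

end PathSeq

section TwoSidedDerived

variable {X : Type*} [TopologicalSpace X] {S : Set X}

def twoSidedDerived (S : Set X) : Ordinal → Set X
  | α => {x | ∀ γ < α,
      x ∈ closure (twoSidedDerived S γ ∩ S) ∧ x ∈ closure (twoSidedDerived S γ ∩ Sᶜ)}
  termination_by α => α

theorem mem_twoSidedDerived {x : X} {α : Ordinal} :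
    x ∈ twoSidedDerived S α ↔ ∀ γ < α,
      x ∈ closure (twoSidedDerived S γ ∩ S) ∧ x ∈ closure (twoSidedDerived S γ ∩ Sᶜ) := by
  rw [twoSidedDerived]
  rfl

theorem twoSidedDerived_anti : Antitone (twoSidedDerived S) := fun _ _ hαβ _ hx =>
  mem_twoSidedDerived.mpr fun γ hγ => mem_twoSidedDerived.mp hx γ (hγ.trans_le hαβ)

theorem disjoint_twoSidedDerived {β : Ordinal} {G : Ordinal → Set X}
    (hG : IsBourgainSeq Sᶜ S β G) {α : Ordinal} (hαβ : α ≤ β) :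
    Disjoint (twoSidedDerived S α) (G α) := by
  obtain ⟨hopen, -, hstep, hlim, hzero, -⟩ := hG
  induction α using Ordinal.limitRecOn with
  | zero => simp [hzero]
  | add_one γ ih =>
    have hγβ : γ < β := (Order.lt_add_one_iff.mpr le_rfl).trans_le hαβ
    refine disjoint_left.mpr fun x hx hxG => ?_
    obtain ⟨hxS, hxSc⟩ := mem_twoSidedDerived.mp hx γ (Order.lt_add_one_iff.mpr le_rfl)
    obtain ⟨y, hyG, hy, hyS⟩ := mem_closure_iff.mp hxS _ (hopen _ hαβ) hxG
    obtain ⟨z, hzG, hz, hzS⟩ := mem_closure_iff.mp hxSc _ (hopen _ hαβ) hxG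
    have hyγ : y ∉ G γ := disjoint_left.mp (ih hγβ.le) hy
    have hzγ : z ∉ G γ := disjoint_left.mp (ih hγβ.le) hz
    rcases hstep γ hγβ with h | h
    · exact h.subset ⟨⟨hzG, hzγ⟩, hzS⟩
    · exact h.subset ⟨⟨hyG, hyγ⟩, hyS⟩
  | limit α hα ih =>
    rw [hlim α hαβ hα]
    refine disjoint_left.mpr fun x hx hxG => ?_
    obtain ⟨γ, hγ, hxγ⟩ := mem_iUnion₂.mp hxG
    exact disjoint_left.mp (ih γ hγ (hγ.le.trans hαβ)) (twoSidedDerived_anti hγ.le hx) hxγ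

theorem lt_of_isBourgainSeq {x : X} {ξ β : Ordinal} {G : Ordinal → Set X}
    (hx : x ∈ twoSidedDerived S ξ) (hG : IsBourgainSeq Sᶜ S β G) : ξ < β := by
  by_contra! h
  have hdisj := disjoint_twoSidedDerived hG le_rfl
  rw [hG.2.2.2.2.2, disjoint_univ] at hdisj
  exact hdisj.subset (twoSidedDerived_anti h hx)

theorem lt_rankL {x : X} {ξ : Ordinal.{u}} (hx : x ∈ twoSidedDerived S ξ)
    (hS : ∃ β : Ordinal.{u}, β < (Cardinal.aleph 1).ord ∧
      ∃ G : Ordinal → Set X, IsBourgainSeq Sᶜ S β G) :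
    ξ < rankL Sᶜ S := by
  obtain ⟨β, hβ, G, hG⟩ := hS
  obtain ⟨-, G', hG'⟩ := csInf_mem (s := {β : Ordinal | β < (Cardinal.aleph 1).ord ∧
    ∃ G : Ordinal → Set X, IsBourgainSeq Sᶜ S β G}) ⟨β, hβ, G, hG⟩
  exact lt_of_isBourgainSeq hx hG'

theorem rankL_le_rankLf (f : X → ℝ) {q₁ q₂ : ℚ} (h : q₁ < q₂) :
    (rankL {x | f x ≤ (q₁ : ℝ)} {x | (q₂ : ℝ) ≤ f x} : Ordinal.{u}) ≤ rankLf f := by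
  refine le_csSup ((Ordinal.bddAbove_of_small (s := range fun q : ℚ × ℚ =>
    (rankL {x | f x ≤ (q.1 : ℝ)} {x | (q.2 : ℝ) ≤ f x} : Ordinal.{u}))).mono ?_) ⟨q₁, q₂, h, rfl⟩
  rintro _ ⟨q₁, q₂, -, rfl⟩
  exact ⟨(q₁, q₂), rfl⟩

theorem rankL_compl_le_rankLf_indicator (S : Set X) :
    (rankL Sᶜ S : Ordinal.{u}) ≤ rankLf (S.indicator 1) := by
  convert rankL_le_rankLf (S.indicator 1) (zero_lt_one' ℚ) using 2 <;>
    ext x <;> by_cases hx : x ∈ S <;> simp [hx]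

end TwoSidedDerived

section BourgainSeq

theorem exists_add_one_inter_subset_of_monotone {α : Type*} {K : Set α} (hK : K.Countable)
    {G : Ordinal.{u} → Set α} (hG : Monotone G) :
    ∃ β < (Cardinal.aleph 1).ord, G (β + 1) ∩ K ⊆ G β := by
  by_contra! h
  choose pt hpt using fun β : Iio (Cardinal.aleph 1).ord => not_subset.mp (h β β.2)
  have hinj : Function.Injective fun β => (⟨pt β, (hpt β).1.2⟩ : K) := by
    intro β γ heq
    by_contra hne
    have heq' : pt β = pt γ := congrArg Subtype.val heq
    rcases lt_or_gt_of_ne (Subtype.coe_ne_coe.mpr hne) with hlt | hlt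
    · exact (hpt γ).2 (heq' ▸ hG (Order.add_one_le_iff.mpr hlt) (hpt β).1.1)
    · exact (hpt β).2 (heq' ▸ hG (Order.add_one_le_iff.mpr hlt) (hpt γ).1.1)
  have hcount := countable_coe_iff.mp (haveI := hK.to_subtype; hinj.countable)
  rw [← Cardinal.le_aleph0_iff_set_countable, Cardinal.mk_Iio_ordinal, Cardinal.lift_le_aleph0,
    ← Cardinal.lt_aleph_one_iff, Cardinal.card_ord] at hcount
  exact lt_irrefl _ hcount

variable {X : Type*} [MetricSpace X]

theorem Perfect.not_countable [CompleteSpace X] {C : Set X} (hC : Perfect C)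
    (hne : C.Nonempty) : ¬C.Countable := by
  intro hcount
  obtain ⟨f, hf_range, -, hf_inj⟩ := hC.exists_nat_bool_injection hne
  have : Countable (ℕ → Bool) := by
    rw [← Set.countable_univ_iff]
    exact (mapsTo_univ_iff.mpr fun b => hf_range ⟨b, rfl⟩).countable_of_injOn
      hf_inj.injOn hcount
  rw [← Cardinal.mk_le_aleph0_iff] at this
  exact this.not_gt (by simpa using Cardinal.cantor Cardinal.aleph0)

theorem exists_isOpen_insert_of_countable [CompleteSpace X] {U : Set X} (hU : IsOpen U)
    (hne : Uᶜ.Nonempty) (hcount : Uᶜ.Countable) : ∃ x ∉ U, IsOpen (insert x U) := by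
  by_contra! h
  refine (Perfect.not_countable ⟨hU.isClosed_compl, fun x hx => ?_⟩ hne) hcount
  rw [accPt_iff_nhds]
  by_contra! hV
  obtain ⟨V, hV, hVx⟩ := hV
  refine h x hx (isOpen_iff_mem_nhds.mpr fun y hy => ?_)
  rcases hy with rfl | hy
  · exact mem_of_superset hV fun z hz => by
      by_cases hzU : z ∈ U
      · exact Or.inr hzU
      · exact Or.inl (hVx z ⟨hz, hzU⟩)
  · exact mem_of_superset (hU.mem_nhds hy) (subset_insert _ _)

variable (K : Set X)

-- one point at a time, so that each increment lies inside `S` or inside `Sᶜ` for any `S ⊆ K`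
def bourgainStep (U : Set X) : Set X :=
  if h : Kᶜ ⊆ U ∧ ∃ x ∉ U, IsOpen (insert x U) then insert h.2.choose U else U ∪ Kᶜ

def bourgainSeq (α : Ordinal) : Set X :=
  Ordinal.limitRecOn α ∅ (fun _ U => bourgainStep K U) fun α _ G => ⋃ β, ⋃ h : β < α, G β h

variable {K}

theorem subset_bourgainStep (U : Set X) : U ⊆ bourgainStep K U := by
  unfold bourgainStep
  split_ifs
  exacts [subset_insert _ _, subset_union_left]

theorem compl_subset_bourgainStep (U : Set X) : Kᶜ ⊆ bourgainStep K U := by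
  unfold bourgainStep
  split_ifs with h
  exacts [h.1.trans (subset_insert _ _), subset_union_right]

theorem isOpen_bourgainStep (hK : IsClosed K) {U : Set X} (hU : IsOpen U) :
    IsOpen (bourgainStep K U) := by
  unfold bourgainStep
  split_ifs with h
  exacts [h.2.choose_spec.2, hU.union hK.isOpen_compl]

theorem bourgainStep_diff {S : Set X} (hSK : S ⊆ K) (U : Set X) :
    (bourgainStep K U \ U) ∩ Sᶜ = ∅ ∨ (bourgainStep K U \ U) ∩ S = ∅ := by
  unfold bourgainStep
  split_ifs with h
  · rw [insert_sdiff_of_notMem _ h.2.choose_spec.1, sdiff_self, insert_empty_eq]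
    by_cases hx : h.2.choose ∈ S
    · exact Or.inl (singleton_inter_eq_empty.mpr (not_not_intro hx))
    · exact Or.inr (singleton_inter_eq_empty.mpr hx)
  · refine Or.inr (eq_empty_of_forall_notMem fun x ⟨⟨hx, hxU⟩, hxS⟩ => ?_)
    exact (hx.resolve_left hxU) (hSK hxS)

theorem exists_mem_bourgainStep_diff [CompleteSpace X] (hK : K.Countable) {U : Set X}
    (hU : IsOpen U) (hKU : Kᶜ ⊆ U) (hne : U ≠ univ) : ∃ x ∈ K, x ∈ bourgainStep K U \ U := by
  have hex := exists_isOpen_insert_of_countable hU (nonempty_compl.mpr hne)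
    (hK.mono (compl_subset_comm.mp hKU))
  have h : Kᶜ ⊆ U ∧ ∃ x ∉ U, IsOpen (insert x U) := ⟨hKU, hex⟩
  refine ⟨h.2.choose, not_not.mp fun hx => h.2.choose_spec.1 (hKU hx), ?_, h.2.choose_spec.1⟩
  rw [bourgainStep, dif_pos h]
  exact mem_insert _ _

theorem bourgainSeq_zero : bourgainSeq K 0 = ∅ := Ordinal.limitRecOn_zero _ _ _

theorem bourgainSeq_add_one (α : Ordinal) :
    bourgainSeq K (α + 1) = bourgainStep K (bourgainSeq K α) :=
  Ordinal.limitRecOn_add_one _ _ _ _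

theorem bourgainSeq_limit {α : Ordinal} (hα : Order.IsSuccLimit α) :
    bourgainSeq K α = ⋃ β < α, bourgainSeq K β :=
  Ordinal.limitRecOn_limit _ _ _ _ hα

theorem isOpen_bourgainSeq (hK : IsClosed K) (α : Ordinal) : IsOpen (bourgainSeq K α) := by
  induction α using Ordinal.limitRecOn with
  | zero => simp [bourgainSeq_zero]
  | add_one α ih => simpa [bourgainSeq_add_one] using isOpen_bourgainStep hK ih
  | limit α hα ih =>
    rw [bourgainSeq_limit hα]
    exact isOpen_biUnion ih

theorem monotone_bourgainSeq : Monotone (bourgainSeq K) := by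
  intro α γ hαγ
  induction γ using Ordinal.limitRecOn with
  | zero => rw [nonpos_iff_eq_zero.mp hαγ]
  | add_one γ ih =>
    rcases hαγ.lt_or_eq with hlt | rfl
    · rw [bourgainSeq_add_one]
      exact (ih (Order.lt_add_one_iff.mp hlt)).trans (subset_bourgainStep _)
    · exact subset_rfl
  | limit γ hγ ih =>
    rcases hαγ.lt_or_eq with hlt | rfl
    · rw [bourgainSeq_limit hγ]
      exact subset_biUnion_of_mem (u := bourgainSeq K) hlt
    · exact subset_rfl

theorem exists_isBourgainSeq [CompleteSpace X] {S : Set X} (hS : (closure S).Countable) :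
    ∃ β : Ordinal.{u}, β < (Cardinal.aleph 1).ord ∧
      ∃ G : Ordinal → Set X, IsBourgainSeq Sᶜ S β G := by
  set G := bourgainSeq (closure S)
  obtain ⟨β, hβ, hstuck⟩ := exists_add_one_inter_subset_of_monotone hS
    (monotone_bourgainSeq.comp (fun _ _ h => add_le_add_left h 1) : Monotone fun β => G (β + 1))
  have huniv : G (β + 1) = univ := by
    by_contra hne
    have hKG : (closure S)ᶜ ⊆ G (β + 1) := by
      simp only [G, bourgainSeq_add_one]
      exact compl_subset_bourgainStep _
    obtain ⟨x, hxK, hx, hx'⟩ :=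
      exists_mem_bourgainStep_diff hS (isOpen_bourgainSeq isClosed_closure _) hKG hne
    exact hx' (hstuck ⟨by rwa [Function.comp_apply, bourgainSeq_add_one], hxK⟩)
  refine ⟨β + 1, (Cardinal.isSuccLimit_ord (Cardinal.aleph0_le_aleph 1)).add_one_lt hβ, G,
    fun α _ => isOpen_bourgainSeq isClosed_closure α, fun α γ h _ => monotone_bourgainSeq h,
    fun α _ => ?_, fun γ _ hγ => bourgainSeq_limit hγ, bourgainSeq_zero, huniv⟩
  simp only [G, bourgainSeq_add_one]
  exact bourgainStep_diff subset_closure _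

end BourgainSeq

section LabelTree

def enumBelow (ξ : Ordinal.{u}) : ℕ → Ordinal.{u} :=
  if h : (Iio ξ).Countable ∧ (Iio ξ).Nonempty then (h.1.exists_eq_range h.2).choose
  else fun _ => 0

theorem countable_Iio_of_lt_ord_aleph_one {ξ : Ordinal.{u}} (hξ : ξ < (Cardinal.aleph 1).ord) :
    (Iio ξ).Countable := by
  rwa [← Cardinal.le_aleph0_iff_set_countable, Cardinal.mk_Iio_ordinal, Cardinal.lift_le_aleph0,
    ← Cardinal.lt_aleph_one_iff, ← Cardinal.lt_ord]

theorem exists_enumBelow_eq {ξ γ : Ordinal.{u}} (hξ : ξ < (Cardinal.aleph 1).ord) (hγ : γ < ξ) :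
    ∃ i, enumBelow ξ i = γ := by
  have h : (Iio ξ).Countable ∧ (Iio ξ).Nonempty :=
    ⟨countable_Iio_of_lt_ord_aleph_one hξ, γ, hγ⟩
  have hrange := (h.1.exists_eq_range h.2).choose_spec
  rw [enumBelow, dif_pos h]
  exact hrange.subset hγ

-- every combination of a rank `γ < ξ` and a label is taken by infinitely many indices `k`
def childRank (ξ : Ordinal.{u}) (k : ℕ) : Ordinal.{u} := enumBelow ξ k.unpair.1

def childLabel (k : ℕ) : Bool := k.unpair.2.bodd

theorem exists_child_ge {ξ γ : Ordinal.{u}} (hξ : ξ < (Cardinal.aleph 1).ord) (hγ : γ < ξ)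
    (b : Bool) (N : ℕ) : ∃ k ≥ N, childRank ξ k = γ ∧ childLabel k = b := by
  obtain ⟨i, hi⟩ := exists_enumBelow_eq hξ hγ
  refine ⟨Nat.pair i (Nat.bit b N), ?_, by simp [childRank, hi], by simp [childLabel]⟩
  calc N ≤ Nat.bit b N := by rw [Nat.bit_val]; omega
    _ ≤ _ := Nat.right_le_pair _ _

variable {X : Type*} [MetricSpace X]

theorem isClosed_insert_iUnion_of_tendsto {c : X} {F : ℕ → Set X} {r : ℕ → ℝ}
    (hF : ∀ k, IsClosed (F k)) (hFr : ∀ k, F k ⊆ Metric.closedBall c (r k))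
    (hr : Tendsto r atTop (𝓝 0)) : IsClosed (insert c (⋃ k, F k)) := by
  refine isClosed_of_closure_subset fun x hx => ?_
  by_cases hxc : x = c
  · exact Or.inl hxc
  -- near `x`, only the finitely many `F k` with `r k ≥ dist x c / 2` matter
  have hδ : 0 < dist x c / 2 := by have := dist_pos.mpr hxc; positivity
  obtain ⟨N, hN⟩ := eventually_atTop.mp (hr.eventually (gt_mem_nhds hδ))
  have hsub : insert c (⋃ k, F k) ⊆
      Metric.closedBall c (dist x c / 2) ∪ ⋃ k ∈ Finset.range N, F k := by
    rintro y (rfl | ⟨_, ⟨k, rfl⟩, hy⟩)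
    · exact Or.inl (Metric.mem_closedBall_self hδ.le)
    · by_cases hk : k < N
      · exact Or.inr (mem_biUnion (Finset.mem_range.mpr hk) hy)
      · exact Or.inl (Metric.closedBall_subset_closedBall (hN k (not_lt.mp hk)).le (hFr k hy))
  rcases closure_minimal hsub (Metric.isClosed_closedBall.union
    (isClosed_biUnion_finset fun k _ => hF k)) hx with h | h
  · have := Metric.mem_closedBall.mp h
    linarith
  · obtain ⟨k, -, hk⟩ := mem_iUnion₂.mp h
    exact Or.inr (mem_iUnion.mpr ⟨k, hk⟩)

def nearIdx (D : ℕ → X) (c : X) (r : ℝ) : ℕ :=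
  Classical.epsilon fun p => D p ∈ Metric.ball c r \ {c}

theorem nearIdx_spec (hX : Perfect (univ : Set X)) {D : ℕ → X} (hD : DenseRange D) (c : X)
    {r : ℝ} (hr : 0 < r) : 0 < dist (D (nearIdx D c r)) c ∧ dist (D (nearIdx D c r)) c < r := by
  have hne : (Metric.ball c r \ {c}).Nonempty := by
    obtain ⟨y, ⟨hy, -⟩, hyc⟩ :=
      accPt_iff_nhds.mp (hX.acc c (mem_univ c)) _ (Metric.ball_mem_nhds c hr)
    exact ⟨y, hy, hyc⟩
  obtain ⟨hball, hne⟩ := Classical.epsilon_spec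
    (hD.exists_mem_open (Metric.isOpen_ball.sdiff isClosed_singleton) hne)
  exact ⟨dist_pos.mpr hne, hball⟩

def childCenter (D : ℕ → X) (c : X) (ε : ℝ) : ℕ → X
  | 0 => D (nearIdx D c (ε / 3))
  | k + 1 => D (nearIdx D c (dist (childCenter D c ε k) c / 3))

section ChildCenter

variable {D : ℕ → X} {c : X} {ε : ℝ}

theorem childCenter_mem_range (k : ℕ) : childCenter D c ε k ∈ range D := by
  cases k <;> exact mem_range_self _

variable (hX : Perfect (univ : Set X)) (hD : DenseRange D) (hε : 0 < ε)
include hX hD hε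

theorem dist_childCenter_pos : ∀ k, 0 < dist (childCenter D c ε k) c
  | 0 => (nearIdx_spec hX hD c (by positivity)).1
  | k + 1 => (nearIdx_spec hX hD c (by have := dist_childCenter_pos k; positivity)).1

theorem dist_childCenter_zero_lt : dist (childCenter D c ε 0) c < ε / 3 :=
  (nearIdx_spec hX hD c (by positivity)).2

theorem dist_childCenter_succ_lt (k : ℕ) :
    dist (childCenter D c ε (k + 1)) c < dist (childCenter D c ε k) c / 3 :=
  (nearIdx_spec hX hD c (by have := dist_childCenter_pos hX hD hε (c := c) k; positivity)).2

theorem dist_childCenter_lt (k : ℕ) : dist (childCenter D c ε k) c < ε / 3 := by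
  induction k with
  | zero => exact dist_childCenter_zero_lt hX hD hε
  | succ k ih =>
    have := dist_childCenter_succ_lt hX hD hε (c := c) k
    have := dist_childCenter_pos hX hD hε (c := c) k
    linarith

theorem dist_childCenter_lt_of_lt {j k : ℕ} (hjk : j < k) :
    dist (childCenter D c ε k) c < dist (childCenter D c ε j) c / 3 := by
  induction k, hjk using Nat.le_induction with
  | base => exact dist_childCenter_succ_lt hX hD hε j
  | succ k _ ih =>
    have := dist_childCenter_succ_lt hX hD hε (c := c) k
    have := dist_childCenter_pos hX hD hε (c := c) k
    linarith

theorem tendsto_dist_childCenter : Tendsto (fun k => dist (childCenter D c ε k) c) atTop (𝓝 0) := by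
  have hbound : ∀ k, dist (childCenter D c ε k) c ≤ ε / 3 * (1 / 3) ^ k := by
    intro k
    induction k with
    | zero => simpa using (dist_childCenter_zero_lt hX hD hε).le
    | succ k ih =>
      have := dist_childCenter_succ_lt hX hD hε (c := c) k
      rw [pow_succ]
      linarith
  refine squeeze_zero (fun k => dist_nonneg) hbound ?_
  simpa using (tendsto_pow_atTop_nhds_zero_of_lt_one (r := (1 / 3 : ℝ)) (by norm_num)
    (by norm_num)).const_mul (ε / 3)

end ChildCenter

-- `(x, b)` in the tree means that `x` receives the label `b`; the guard `childRank ξ k < ξ` only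
-- bites at `ξ = 0`, which has no children
def labelTree (D : ℕ → X) : Ordinal.{u} → Bool → X → ℝ → Set (X × Bool)
  | ξ, l, c, ε => insert (c, l) (⋃ k, ⋃ (_ : childRank ξ k < ξ),
      labelTree D (childRank ξ k) (childLabel k) (childCenter D c ε k)
        (dist (childCenter D c ε k) c / 3))
  termination_by ξ => ξ

def childTree (D : ℕ → X) (ξ : Ordinal.{u}) (c : X) (ε : ℝ) (k : ℕ) : Set (X × Bool) :=
  labelTree D (childRank ξ k) (childLabel k) (childCenter D c ε k)
    (dist (childCenter D c ε k) c / 3)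

variable {D : ℕ → X}

theorem labelTree_eq (ξ : Ordinal.{u}) (l : Bool) (c : X) (ε : ℝ) :
    labelTree D ξ l c ε = insert (c, l) (⋃ k, ⋃ (_ : childRank ξ k < ξ), childTree D ξ c ε k) := by
  rw [labelTree]
  rfl

theorem mem_labelTree {ξ : Ordinal.{u}} {l : Bool} {c : X} {ε : ℝ} {p : X × Bool} :
    p ∈ labelTree D ξ l c ε ↔ p = (c, l) ∨ ∃ k, childRank ξ k < ξ ∧ p ∈ childTree D ξ c ε k := by
  simp [labelTree_eq]

theorem fst_mem_range_of_mem_labelTree {ξ : Ordinal.{u}} {l : Bool} {c : X} {ε : ℝ}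
    (hc : c ∈ range D) {p : X × Bool} (hp : p ∈ labelTree D ξ l c ε) : p.1 ∈ range D := by
  induction ξ using WellFoundedLT.induction generalizing l c ε p with
  | ind ξ ih =>
    rcases mem_labelTree.mp hp with rfl | ⟨k, hk, hpk⟩
    · exact hc
    · exact ih _ hk (childCenter_mem_range k) hpk

variable (hX : Perfect (univ : Set X)) (hD : DenseRange D)
include hX hD

theorem dist_le_of_mem_labelTree {ξ : Ordinal.{u}} {l : Bool} {c : X} {ε : ℝ} (hε : 0 < ε)
    {p : X × Bool} (hp : p ∈ labelTree D ξ l c ε) : dist p.1 c ≤ ε / 2 := by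
  induction ξ using WellFoundedLT.induction generalizing l c ε p with
  | ind ξ ih =>
    rcases mem_labelTree.mp hp with rfl | ⟨k, hk, hpk⟩
    · simp only [dist_self]
      positivity
    · have hdk := dist_childCenter_lt hX hD hε (c := c) k
      have hpos := dist_childCenter_pos hX hD hε (c := c) k
      have hchild := ih _ hk (by positivity) hpk
      have := dist_triangle p.1 (childCenter D c ε k) c
      linarith

theorem mem_annulus_of_mem_childTree {ξ : Ordinal.{u}} {c : X} {ε : ℝ} (hε : 0 < ε) {k : ℕ}
    {p : X × Bool} (hp : p ∈ childTree D ξ c ε k) :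
    5 / 6 * dist (childCenter D c ε k) c ≤ dist p.1 c ∧
      dist p.1 c ≤ 7 / 6 * dist (childCenter D c ε k) c := by
  have hpos := dist_childCenter_pos hX hD hε (c := c) k
  have hchild := dist_le_of_mem_labelTree hX hD (by positivity) hp
  have := dist_triangle p.1 (childCenter D c ε k) c
  have := dist_triangle_left (childCenter D c ε k) c p.1
  constructor <;> linarith

theorem childTree_eq_of_mem {ξ : Ordinal.{u}} {c : X} {ε : ℝ} (hε : 0 < ε) {j k : ℕ}
    {p q : X × Bool} (hp : p ∈ childTree D ξ c ε j) (hq : q ∈ childTree D ξ c ε k)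
    (hpq : p.1 = q.1) : j = k := by
  -- the annuli `[5/6 d, 7/6 d]` around `c` are disjoint, since the distances `d` drop by `3`
  have key : ∀ {j k : ℕ} {p q : X × Bool}, j < k → p ∈ childTree D ξ c ε j →
      q ∈ childTree D ξ c ε k → p.1 ≠ q.1 := by
    intro j k p q hjk hp hq hpq
    have := (mem_annulus_of_mem_childTree hX hD hε hp).1
    have := (mem_annulus_of_mem_childTree hX hD hε hq).2
    have := dist_childCenter_lt_of_lt hX hD hε (c := c) hjk
    have := dist_childCenter_pos hX hD hε (c := c) j
    rw [hpq] at *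
    linarith
  by_contra hne
  rcases Nat.lt_or_gt_of_ne hne with hjk | hjk
  exacts [key hjk hp hq hpq, key hjk hq hp hpq.symm]

theorem label_eq_of_mem_labelTree {ξ : Ordinal.{u}} {l : Bool} {c : X} {ε : ℝ} (hε : 0 < ε)
    {x : X} {b b' : Bool} (hb : (x, b) ∈ labelTree D ξ l c ε)
    (hb' : (x, b') ∈ labelTree D ξ l c ε) : b = b' := by
  induction ξ using WellFoundedLT.induction generalizing l c ε with
  | ind ξ ih =>
    have hroot : ∀ {k : ℕ} {b : Bool}, (x, b) ∈ childTree D ξ c ε k → x ≠ c := by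
      intro k b hk hxc
      have := (mem_annulus_of_mem_childTree hX hD hε hk).1
      have := dist_childCenter_pos hX hD hε (c := c) k
      simp only [hxc, dist_self] at *
      linarith
    rcases mem_labelTree.mp hb with hb | ⟨j, hj, hbj⟩ <;>
      rcases mem_labelTree.mp hb' with hb' | ⟨k, hk, hbk⟩
    · simp_all
    · exact absurd (Prod.mk.inj hb).1 (hroot hbk)
    · exact absurd (Prod.mk.inj hb').1 (hroot hbj)
    · obtain rfl := childTree_eq_of_mem hX hD hε hbj hbk rfl
      exact ih _ hj (by have := dist_childCenter_pos hX hD hε (c := c) j; positivity) hbj hbk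

theorem mem_twoSidedDerived_of_labelTree {ξ : Ordinal.{u}} (hξ : ξ < (Cardinal.aleph 1).ord)
    {l : Bool} {c : X} {ε : ℝ} (hε : 0 < ε) {S : Set X}
    (hS : ∀ p ∈ labelTree D ξ l c ε, p.1 ∈ S ↔ p.2 = true) : c ∈ twoSidedDerived S ξ := by
  induction ξ using WellFoundedLT.induction generalizing l c ε with
  | ind ξ ih =>
    -- children of every rank `γ < ξ` and either label accumulate at `c`
    have hclose : ∀ γ < ξ, ∀ b : Bool,
        c ∈ closure (twoSidedDerived S γ ∩ {y | y ∈ S ↔ b = true}) := by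
      intro γ hγ b
      refine Metric.mem_closure_iff.mpr fun r hr => ?_
      obtain ⟨N, hN⟩ := eventually_atTop.mp
        ((tendsto_dist_childCenter hX hD hε (c := c)).eventually (gt_mem_nhds hr))
      obtain ⟨k, hkN, hkγ, hkb⟩ := exists_child_ge hξ hγ b N
      have hsub : childTree D ξ c ε k ⊆ labelTree D ξ l c ε := fun p hp =>
        mem_labelTree.mpr (Or.inr ⟨k, hkγ ▸ hγ, hp⟩)
      have hroot : (childCenter D c ε k, b) ∈ childTree D ξ c ε k := by
        rw [childTree, labelTree_eq, hkb]
        exact mem_insert _ _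
      refine ⟨childCenter D c ε k, ⟨?_, hS _ (hsub hroot)⟩, by rw [dist_comm]; exact hN k hkN⟩
      have hpos := dist_childCenter_pos hX hD hε (c := c) k
      rw [← hkγ]
      exact ih _ (hkγ ▸ hγ) ((hkγ ▸ hγ).trans hξ) (by positivity) fun p hp => hS p (hsub hp)
    refine mem_twoSidedDerived.mpr fun γ hγ => ⟨?_, ?_⟩
    · simpa using hclose γ hγ true
    · have hsub : twoSidedDerived S γ ∩ {y | y ∈ S ↔ false = true} ⊆
          twoSidedDerived S γ ∩ Sᶜ := fun y hy => ⟨hy.1, by simpa using hy.2⟩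
      exact closure_mono hsub (hclose γ hγ false)

theorem isClosed_fst_image_labelTree {ξ : Ordinal.{u}} {l : Bool} {c : X} {ε : ℝ} (hε : 0 < ε) :
    IsClosed (Prod.fst '' labelTree D ξ l c ε) := by
  induction ξ using WellFoundedLT.induction generalizing l c ε with
  | ind ξ ih =>
    rw [labelTree_eq, image_insert_eq, image_iUnion₂]
    refine isClosed_insert_iUnion_of_tendsto (r := fun k => 7 / 6 * dist (childCenter D c ε k) c)
      (fun k => isClosed_iUnion_of_finite fun hk => ?_) (fun k => ?_) ?_
    · have := dist_childCenter_pos hX hD hε (c := c) k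
      exact ih _ hk (by positivity)
    · simp only [iUnion_subset_iff, image_subset_iff]
      exact fun _ p hp => Metric.mem_closedBall.mpr (mem_annulus_of_mem_childTree hX hD hε hp).2
    · simpa using (tendsto_dist_childCenter hX hD hε (c := c)).const_mul (7 / 6)

theorem exists_closure_subset_range_twoSidedDerived_nonempty {ξ : Ordinal.{u}}
    (hξ : ξ < (Cardinal.aleph 1).ord) :
    ∃ S : Set X, closure S ⊆ range D ∧ (twoSidedDerived S ξ).Nonempty := by
  set T := labelTree D ξ true (D 0) 1
  set S := {x | (x, true) ∈ T}
  have hS_fst : S ⊆ Prod.fst '' T := fun x hx => ⟨(x, true), hx, rfl⟩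
  have hS_label : ∀ p ∈ T, p.1 ∈ S ↔ p.2 = true := by
    rintro ⟨x, b⟩ hp
    refine ⟨fun hx => label_eq_of_mem_labelTree hX hD one_pos hx hp ▸ rfl, fun hb => ?_⟩
    obtain rfl : b = true := hb
    exact hp
  refine ⟨S, ?_, D 0, mem_twoSidedDerived_of_labelTree hX hD hξ one_pos hS_label⟩
  refine (closure_minimal hS_fst (isClosed_fst_image_labelTree hX hD one_pos)).trans ?_
  rintro _ ⟨p, hp, rfl⟩
  exact fst_mem_range_of_mem_labelTree (mem_range_self 0) hp

end LabelTree

theorem bourgainRank_unbounded_on_recoverable_general {X : Type*} [TopologicalSpace X] [PolishSpace X]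
    (hX : Perfect (Set.univ : Set X))
    (W : ℕ → Set X) (hW : IsGoodBasis W) (D : ℕ → X) (hD : DenseRange D) :
    ∀ ξ < (Cardinal.aleph 1).ord, ∃ f : X → ℝ,
      (∀ x, f x = 0 ∨ f x = 1) ∧ RecoverableWith W D f ∧ ξ < rankLf f := by
  let _ := TopologicalSpace.upgradeIsCompletelyMetrizable X
  intro ξ hξ
  obtain ⟨S, hS_range, c, hc⟩ := exists_closure_subset_range_twoSidedDerived_nonempty hX hD hξ
  refine ⟨S.indicator 1, fun x => ?_, recoverableWith_indicator hW hD hS_range 1, ?_⟩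
  · by_cases hx : x ∈ S <;> simp [hx]
  calc ξ < rankL Sᶜ S := lt_rankL hc (exists_isBourgainSeq ((countable_range D).mono hS_range))
    _ ≤ rankLf (S.indicator 1) := rankL_compl_le_rankLf_indicator S

/-- On a nonempty perfect Polish space, for any fixed good basis and dense sequence, the
Bourgain ranks of the `{0,1}`-valued functions recoverable with respect to it are unbounded
below `ω₁`. -/
theorem bourgainRank_unbounded_on_recoverable {X : Type*} [TopologicalSpace X] [PolishSpace X]
    [Nonempty X] (hX : Perfect (Set.univ : Set X))
    (W : ℕ → Set X) (hW : IsGoodBasis W) (D : ℕ → X) (hD : DenseRange D) :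
    ∀ ξ < (Cardinal.aleph 1).ord, ∃ f : X → ℝ,
      (∀ x, f x = 0 ∨ f x = 1) ∧ RecoverableWith W D f ∧ ξ < rankLf f :=
  bourgainRank_unbounded_on_recoverable_general hX W hW D hD
end
end
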